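/- arXiv:1003.1489 — 6 statements merged into one kernel-verified Lean document; each statement's English description precedes it below -/
import Mathlib

section
/- For every fixed integer d ≥ 2 and every nonempty finite set Q of prime numbers, the root α(Q,d) does not exceed the unique positive root of the equation 1/ζ(x) = (d−1)/d, where ζ is the Riemann zeta function; in particular, for d = 2 and any Q, α(Q,2) ≤ 1.7286…, the root of ζ(x) = 2. -/
/-!
Since `1 / ζ(β) = (d - 1) / d > 0` while `ζ < 0` on `(0, 1]`, we have `β > 1`. (On `(0, 1)` the sign
comes from `ζ(x) = η(x) / (1 - 2^(1-x))`, where the alternating series `η(x)` is positive.) For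
`β > 1` the Euler product gives `(d - 1) / d = ∏_p (1 - p^(-β)) ≤ ∏_{q ∈ Q} (1 - q^(-β))`, and
`x ↦ ∏_{q ∈ Q} (1 - q^(-x))` is strictly increasing on `x > 0`, so `α ≤ β`.
-/

open scoped ComplexOrder

lemma norm_ofReal_cpow_neg_sub_le {a b : ℝ} (ha : 0 < a) (hab : a ≤ b) {s : ℂ} (hs : -1 ≤ s.re) :
    ‖(a : ℂ) ^ (-s) - (b : ℂ) ^ (-s)‖ ≤ ‖s‖ * a ^ (-s.re - 1) * (b - a) := by
  have hderiv : ∀ t ∈ Set.Icc a b,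
      HasDerivWithinAt (fun t : ℝ ↦ (t : ℂ) ^ (-s)) (-s * (t : ℂ) ^ (-s - 1)) (Set.Icc a b) t :=
    fun t ht ↦ ((Complex.hasStrictDerivAt_cpow_const (c := -s) (Complex.ofReal_mem_slitPlane.2
      (ha.trans_le ht.1))).hasDerivAt.comp_ofReal).hasDerivWithinAt
  have hbound : ∀ t ∈ Set.Icc a b, ‖-s * (t : ℂ) ^ (-s - 1)‖ ≤ ‖s‖ * a ^ (-s.re - 1) := by
    intro t ht
    rw [norm_mul, norm_neg, Complex.norm_cpow_eq_rpow_re_of_pos (ha.trans_le ht.1)]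
    gcongr
    exact Real.rpow_le_rpow_of_nonpos ha ht.1 (by simp; linarith)
  rw [norm_sub_rev]
  simpa [abs_of_nonneg (sub_nonneg.mpr hab)] using
    (convex_Icc a b).norm_image_sub_le_of_norm_hasDerivWithin_le hderiv hbound
      (Set.left_mem_Icc.2 hab) (Set.right_mem_Icc.2 hab)

/-- The terms of `η(s) = ∑ (-1)^(n+1) n^(-s)` grouped in pairs, so that the series converges
absolutely on `0 < re s`. -/
noncomputable def dirichletEtaTerm (s : ℂ) (k : ℕ) : ℂ :=
  ((2 * k + 1 : ℕ) : ℂ) ^ (-s) - ((2 * k + 2 : ℕ) : ℂ) ^ (-s)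

noncomputable def dirichletEta (s : ℂ) : ℂ := ∑' k, dirichletEtaTerm s k

lemma norm_dirichletEtaTerm_le {s : ℂ} (hs : 0 ≤ s.re) (k : ℕ) :
    ‖dirichletEtaTerm s k‖ ≤ ‖s‖ * ((k : ℝ) + 1) ^ (-s.re - 1) := by
  have h := norm_ofReal_cpow_neg_sub_le (a := (2 * k + 1 : ℕ)) (b := (2 * k + 2 : ℕ))
    (by positivity) (by push_cast; linarith) (by linarith)
  simp only [Complex.ofReal_natCast] at h
  refine h.trans ?_
  have : (((2 * k + 2 : ℕ) : ℝ) - (2 * k + 1 : ℕ)) = 1 := by push_cast; ring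
  rw [this, mul_one]
  exact mul_le_mul_of_nonneg_left
    (Real.rpow_le_rpow_of_nonpos (by positivity) (by push_cast; linarith) (by linarith))
    (norm_nonneg s)

lemma summable_rpow_neg_sub_one {σ : ℝ} (hσ : 0 < σ) :
    Summable fun k : ℕ ↦ ((k : ℝ) + 1) ^ (-σ - 1) := by
  simpa using (summable_nat_add_iff 1).mpr (Real.summable_nat_rpow.mpr (by linarith : -σ - 1 < -1))

lemma summable_dirichletEtaTerm {s : ℂ} (hs : 0 < s.re) : Summable (dirichletEtaTerm s) :=
  .of_norm_bounded ((summable_rpow_neg_sub_one hs).mul_left ‖s‖) (norm_dirichletEtaTerm_le hs.le)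

lemma differentiable_dirichletEtaTerm (k : ℕ) : Differentiable ℂ fun s ↦ dirichletEtaTerm s k :=
  (differentiable_neg.const_cpow (.inl (by positivity))).sub
    (differentiable_neg.const_cpow (.inl (by positivity)))

lemma differentiableOn_dirichletEta : DifferentiableOn ℂ dirichletEta {s | 0 < s.re} := by
  intro s₀ (hs₀ : 0 < s₀.re)
  obtain ⟨σ, hσ, hσs₀⟩ : ∃ σ, 0 < σ ∧ σ < s₀.re := ⟨s₀.re / 2, by linarith, by linarith⟩
  set R := ‖s₀‖ + 1
  set U := {s : ℂ | σ < s.re} ∩ Metric.ball 0 R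
  have hU : IsOpen U := (isOpen_lt continuous_const Complex.continuous_re).inter Metric.isOpen_ball
  have hs₀U : s₀ ∈ U := ⟨hσs₀, by simp [R]⟩
  have hbound : ∀ k, ∀ w ∈ U, ‖dirichletEtaTerm w k‖ ≤ R * ((k : ℝ) + 1) ^ (-σ - 1) := by
    rintro k w ⟨hσw : σ < w.re, hwR⟩
    refine (norm_dirichletEtaTerm_le (by linarith) k).trans (mul_le_mul ?_ ?_ (by positivity)
      (by positivity))
    · simpa using (mem_ball_zero_iff.mp hwR).le
    · exact Real.rpow_le_rpow_of_exponent_le (by linarith) (by linarith)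
  exact ((Complex.differentiableOn_tsum_of_summable_norm
    ((summable_rpow_neg_sub_one hσ).mul_left R)
    (fun k ↦ (differentiable_dirichletEtaTerm k).differentiableOn) hU hbound).differentiableAt
    (hU.mem_nhds hs₀U)).differentiableWithinAt

lemma dirichletEta_eq_of_one_lt_re {s : ℂ} (hs : 1 < s.re) :
    dirichletEta s = (1 - 2 * 2 ^ (-s)) * riemannZeta s := by
  set F : ℕ → ℂ := fun n ↦ (n : ℂ) ^ (-s)
  have hF : Summable F := by
    simpa [F, Complex.cpow_neg] using Complex.summable_one_div_nat_cpow.mpr hs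
  have hζ : ∑' n, F n = riemannZeta s := by
    simp [F, zeta_eq_tsum_one_div_nat_cpow hs, Complex.cpow_neg]
  have hF0 : F 0 = 0 := by
    simp [F, Complex.zero_cpow (neg_ne_zero.mpr (Complex.ne_zero_of_one_lt_re hs))]
  have hF2 : ∀ n, F (2 * n) = 2 ^ (-s) * F n := fun n ↦ by
    simpa [F] using Complex.natCast_mul_natCast_cpow 2 n (-s)
  have hFeven : Summable fun k ↦ F (2 * k) := hF.comp_injective fun a b h ↦ by omega
  have hFodd : Summable fun k ↦ F (2 * k + 1) := hF.comp_injective fun a b h ↦ by omega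
  have hFeven' : Summable fun k ↦ F (2 * k + 2) := hF.comp_injective fun a b h ↦ by omega
  have heven : ∑' k, F (2 * k) = 2 ^ (-s) * riemannZeta s := by
    simp only [hF2, tsum_mul_left, hζ]
  have hodd : ∑' k, F (2 * k + 1) = riemannZeta s - 2 ^ (-s) * riemannZeta s := by
    have := tsum_even_add_odd hFeven hFodd
    rw [heven, hζ] at this
    linear_combination this
  have heven' : ∑' k, F (2 * k + 2) = 2 ^ (-s) * riemannZeta s := by
    rw [← heven, hFeven.tsum_eq_zero_add]
    simp [hF0, mul_add]
  calc dirichletEta s = ∑' k, F (2 * k + 1) - ∑' k, F (2 * k + 2) := hFodd.tsum_sub hFeven'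
    _ = _ := by rw [hodd, heven']; ring

lemma dirichletEta_eq_of_re_lt_one {s : ℂ} (hs0 : 0 < s.re) (hs1 : s.re < 1) :
    dirichletEta s = (1 - 2 * 2 ^ (-s)) * riemannZeta s := by
  -- a connected open set containing `s`, avoiding the pole `1` and meeting `1 < re`
  set U := ({z : ℂ | 0 < z.re} ∩ {z | z.re < 1}) ∪ ({z : ℂ | 0 < z.re} ∩ {z | 0 < z.im})
  have hUopen : IsOpen U :=
    ((isOpen_lt continuous_const Complex.continuous_re).inter
      (isOpen_lt Complex.continuous_re continuous_const)).union
    ((isOpen_lt continuous_const Complex.continuous_re).inter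
      (isOpen_lt continuous_const Complex.continuous_im))
  have hUpre : IsPreconnected U :=
    .union (1 / 2 + Complex.I) (by norm_num) (by norm_num)
      ((convex_halfSpace_re_gt 0).inter (convex_halfSpace_re_lt 1)).isPreconnected
      ((convex_halfSpace_re_gt 0).inter (convex_halfSpace_im_gt 0)).isPreconnected
  have hη : AnalyticOnNhd ℂ dirichletEta U :=
    (differentiableOn_dirichletEta.mono fun z hz ↦ hz.elim (·.1) (·.1)).analyticOnNhd hUopen
  have hζ : AnalyticOnNhd ℂ (fun z ↦ (1 - 2 * 2 ^ (-z)) * riemannZeta z) U := by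
    refine DifferentiableOn.analyticOnNhd (fun z hz ↦ DifferentiableAt.differentiableWithinAt ?_)
      hUopen
    have hz1 : z ≠ 1 := by rintro rfl; norm_num [U] at hz
    exact (by fun_prop : DifferentiableAt ℂ (fun z : ℂ ↦ (1 : ℂ) - 2 * (2 : ℂ) ^ (-z)) z).mul
      (differentiableAt_riemannZeta hz1)
  refine hη.eqOn_of_preconnected_of_eventuallyEq hζ hUpre (z₀ := 2 + Complex.I) (by norm_num [U])
    ?_ (.inl ⟨hs0, hs1⟩)
  filter_upwards [(isOpen_lt continuous_const Complex.continuous_re).mem_nhds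
    (show 1 < (2 + Complex.I).re by norm_num)] with z hz using dirichletEta_eq_of_one_lt_re hz

lemma dirichletEta_ofReal_pos {x : ℝ} (hx : 0 < x) : 0 < dirichletEta x := by
  set t : ℕ → ℝ := fun k ↦ ((2 * k + 1 : ℕ) : ℝ) ^ (-x) - ((2 * k + 2 : ℕ) : ℝ) ^ (-x)
  have ht : ∀ k, (t k : ℂ) = dirichletEtaTerm x k := fun k ↦ by
    simp only [t, dirichletEtaTerm, Complex.ofReal_sub, Complex.ofReal_cpow (Nat.cast_nonneg _),
      Complex.ofReal_natCast, Complex.ofReal_neg]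
  have hsum : Summable t := Complex.summable_ofReal.mp <| by
    simpa only [ht] using summable_dirichletEtaTerm (s := x) (by simpa using hx)
  have hnonneg : ∀ k, 0 ≤ t k := fun k ↦ sub_nonneg.mpr <|
    Real.rpow_le_rpow_of_nonpos (by positivity) (by push_cast; linarith) (by linarith)
  have ht0 : 0 < t 0 := by
    simpa [t] using Real.rpow_lt_one_of_one_lt_of_neg one_lt_two (neg_neg_of_pos hx)
  rw [dirichletEta, ← tsum_congr ht, ← Complex.ofReal_tsum]
  exact Complex.zero_lt_real.mpr (hsum.tsum_pos hnonneg 0 ht0)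

lemma riemannZeta_one_neg : riemannZeta 1 < 0 := by
  have hlog : 1 < Real.log (4 * Real.pi) := by
    rw [Real.lt_log_iff_exp_lt (by positivity)]
    linarith [Real.exp_one_lt_d9, Real.pi_gt_three]
  have hclog : Complex.log (4 * Real.pi) = ↑(Real.log (4 * Real.pi)) := by
    rw [Complex.ofReal_log (by positivity)]
    push_cast
    rfl
  rw [riemannZeta_one, hclog]
  exact_mod_cast (show (Real.eulerMascheroniConstant - Real.log (4 * Real.pi)) / 2 < 0 by
    linarith [Real.eulerMascheroniConstant_lt_two_thirds])

lemma riemannZeta_ofReal_neg {x : ℝ} (h0 : 0 < x) (h1 : x ≤ 1) : riemannZeta x < 0 := by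
  rcases h1.lt_or_eq with h1 | rfl
  · have hfactor : (1 : ℂ) - 2 * 2 ^ (-(x : ℂ)) = ↑(1 - 2 * (2 : ℝ) ^ (-x)) := by
      push_cast [Complex.ofReal_cpow zero_le_two]
      rfl
    have hfactor_neg : 1 - 2 * (2 : ℝ) ^ (-x) < 0 := by
      have := Real.rpow_lt_rpow_of_exponent_lt one_lt_two (neg_lt_neg h1)
      rw [Real.rpow_neg_one] at this
      linarith
    have hη := dirichletEta_eq_of_re_lt_one (s := x) (by simpa using h0) (by simpa using h1)
    rw [hfactor] at hη
    rw [eq_div_of_mul_eq (by exact_mod_cast hfactor_neg.ne) (hη.trans (mul_comm _ _)).symm]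
    exact div_neg_of_pos_of_neg (dirichletEta_ofReal_pos h0) (by exact_mod_cast hfactor_neg)
  · exact_mod_cast riemannZeta_one_neg

lemma riemannZeta_ofReal_eq_tsum {x : ℝ} (hx : 1 < x) :
    riemannZeta x = ↑(∑' n : ℕ, (n : ℝ) ^ (-x)) := by
  rw [zeta_eq_tsum_one_div_nat_cpow (by simpa using hx), Complex.ofReal_tsum]
  refine tsum_congr fun n ↦ ?_
  rw [Complex.ofReal_cpow n.cast_nonneg, Complex.ofReal_neg, Complex.cpow_neg, one_div,
    Complex.ofReal_natCast]

lemma inv_tsum_rpow_neg_le_prod_one_sub {x : ℝ} (hx : 1 < x) (Q : Finset ℕ) :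
    (∑' n : ℕ, (n : ℝ) ^ (-x))⁻¹ ≤ ∏ p ∈ Q with p.Prime, (1 - (p : ℝ) ^ (-x)) := by
  let f : ℕ →* ℝ :=
    { toFun n := (n : ℝ) ^ (-x)
      map_one' := by simp
      map_mul' m n := by push_cast; exact Real.mul_rpow m.cast_nonneg n.cast_nonneg }
  have hf : Summable f := Real.summable_nat_rpow.mpr (by linarith)
  have hpos : 0 < ∏ p ∈ Q with p.Prime, (1 - f p)⁻¹ :=
    Finset.prod_pos fun p hp ↦ inv_pos.mpr <| sub_pos.mpr <|
      Real.rpow_lt_one_of_one_lt_of_neg (by exact_mod_cast (Finset.mem_filter.mp hp).2.one_lt)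
        (by linarith)
  have hle : ∏ p ∈ Q with p.Prime, (1 - f p)⁻¹ ≤ ∑' n, f n := by
    -- the product is the sum of `n ^ (-x)` over the `n` whose prime factors all lie in `Q`
    rw [EulerProduct.prod_filter_prime_geometric_eq_tsum_factoredNumbers hf]
    exact hf.tsum_subtype_le _ _ fun n ↦ Real.rpow_nonneg n.cast_nonneg _
  have := inv_anti₀ hpos hle
  rwa [Finset.prod_inv_distrib, inv_inv] at this

lemma strictMonoOn_prod_one_sub_rpow_neg {Q : Finset ℕ} (hQne : Q.Nonempty)
    (hQ : ∀ q ∈ Q, 1 < q) :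
    StrictMonoOn (fun x : ℝ ↦ ∏ q ∈ Q, (1 - (q : ℝ) ^ (-x))) (Set.Ioi 0) := by
  intro x hx y hy hxy
  have hq : ∀ q ∈ Q, (1 : ℝ) < q := fun q hq ↦ by exact_mod_cast hQ q hq
  refine Finset.prod_lt_prod_of_nonempty (fun q hqQ ↦ ?_) (fun q hqQ ↦ ?_) hQne
  · exact sub_pos.mpr (Real.rpow_lt_one_of_one_lt_of_neg (hq q hqQ) (neg_neg_of_pos hx))
  · exact sub_lt_sub_left (Real.rpow_lt_rpow_of_exponent_lt (hq q hqQ) (neg_lt_neg hxy)) 1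

/-- For every integer `d ≥ 2` and nonempty finite set `Q` of primes,
the unique positive root `α = α(Q,d)` of `(d-1)/d = ∏_{q ∈ Q} (1 - q^{-x})` does not
exceed the unique positive root `β` of `1/ζ(x) = (d-1)/d`, where `ζ` is the Riemann
zeta function. -/
theorem root_le_zeta_root (Q : Finset ℕ) (hQne : Q.Nonempty)
    (hQ : ∀ q ∈ Q, Nat.Prime q) (d : ℕ) (hd : 2 ≤ d) (α β : ℝ)
    (hα : 0 < α ∧ ((d : ℝ) - 1) / d = ∏ q ∈ Q, (1 - (q : ℝ) ^ (-α)))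
    (hβ : 0 < β ∧ (riemannZeta (β : ℂ))⁻¹ = ((d : ℂ) - 1) / d) :
    α ≤ β := by
  obtain ⟨hα0, hαQ⟩ := hα
  obtain ⟨hβ0, hβζ⟩ := hβ
  set c : ℝ := ((d : ℝ) - 1) / d
  have hd' : (2 : ℝ) ≤ d := by exact_mod_cast hd
  have hc : 0 < c := div_pos (by linarith) (by linarith)
  have hζβ : riemannZeta β = ↑c⁻¹ := by
    rw [← inv_inv (riemannZeta β), hβζ]
    simp [c]
  have hβ1 : 1 < β := by
    by_contra! hβ1
    exact (riemannZeta_ofReal_neg hβ0 hβ1).not_gt (hζβ ▸ Complex.zero_lt_real.mpr (inv_pos.mpr hc))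
  have hsum : ∑' n : ℕ, (n : ℝ) ^ (-β) = c⁻¹ := by
    exact_mod_cast (riemannZeta_ofReal_eq_tsum hβ1).symm.trans hζβ
  have hcβ := inv_tsum_rpow_neg_le_prod_one_sub hβ1 Q
  rw [hsum, inv_inv, Finset.filter_true_of_mem hQ, hαQ] at hcβ
  exact ((strictMonoOn_prod_one_sub_rpow_neg hQne fun q hq ↦ (hQ q hq).one_lt).le_iff_le
    hα0 hβ0).mp hcβ
end

section
/- For each special word u of F(Σ,Q) of length n ≥ 3 there exist a unique letter a ∈ Σ and a unique subset Q(u) ⊆ Q such that: for every q ∈ Q(u), and for no other element of Q, the word u can be represented as u = φ_{a,q}(v_q)·a^m with v_q ∈ F(Σ,Q) and 0 ≤ m < q; moreover for each q ∈ Q(u) the word v_q has length ⌊n/q⌋ and L(u) = L(v_q). -/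
open Filter

/-- The Toeplitz morphism `φ_{a,m}` sending each letter `b` to `a^{m-1} b`,
extended to words. -/
def phi {A : Type*} (a : A) (m : ℕ) (w : List A) : List A :=
  w.flatMap (fun b => List.replicate (m - 1) a ++ [b])

/-- The language `L(Σ,Q)`: the closure of the single letters under the
morphisms `φ_{a,q}` for `a ∈ Σ` and `q ∈ Q`. -/
inductive IsL {A : Type*} (Q : Finset ℕ) : List A → Prop
  | base (c : A) : IsL Q [c]
  | step (a : A) (q : ℕ) (hq : q ∈ Q) {w : List A} (hw : IsL Q w) : IsL Q (phi a q w)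

/-- `F(Σ,Q)`: the factorial closure of `L(Σ,Q)`. -/
def FQ (A : Type*) (Q : Finset ℕ) : Set (List A) :=
  { u | ∃ v, IsL Q v ∧ u <:+: v }

/-- The set `L(u)` of left extensions of `u` inside `F(Σ,Q)`. -/
def Lext (A : Type*) (Q : Finset ℕ) (u : List A) : Set A :=
  { a | (a :: u) ∈ FQ A Q }

/-- `u` is (left) special in `F(Σ,Q)`. -/
def IsSpecial (A : Type*) (Q : Finset ℕ) (u : List A) : Prop :=
  u ∈ FQ A Q ∧ (Lext A Q u).ncard ≠ 1

/-- The subword complexity `p(n)` of `F(Σ,Q)`. -/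
noncomputable def pF (A : Type*) (Q : Finset ℕ) (n : ℕ) : ℕ :=
  Set.ncard { u ∈ FQ A Q | u.length = n }

/-- The first differences `s(n) = p(n+1) - p(n)`. -/
noncomputable def sF (A : Type*) (Q : Finset ℕ) (n : ℕ) : ℤ :=
  (pF A Q (n + 1) : ℤ) - (pF A Q n : ℤ)


/-!
Fix two distinct left extensions `c₁ u` and `c₂ u` of the special word `u`. Each is a factor of
some `phi α ρ w`, whose letters other than `α` sit at positions `≡ -1 (mod ρ)`. Either `u` itself
is aligned with the blocks of `phi α ρ w`, or `α` is the extension letter; in the latter case the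
two patterns must alternate along `u`, which is only possible when `u` is aligned with blocks of
length `2`. Either way `u = phi a q v · a^m` with `q ∈ Q` and `v` the word of every `q`-th letter of
`u`, and `a = u[0]` is unique.

The key fact is that `F(Σ,Q)` is closed under decimation: if `y₀ a^(σ-1) y₁ ⋯ a^(σ-1) yₖ` lies
in `F(Σ,Q)`, so does `y₀ y₁ ⋯ yₖ`. It is proved by induction along `L(Σ,Q)`: inside `phi α ρ w`
the samples are all `α` when `α ≠ a`; when `α = a` they are read from `w` with stride `σ / ρ` if
`ρ ∣ σ`; otherwise (`ρ` being prime) only the samples at indices `≡ j₀ (mod ρ)` can differ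
from `a`, they form a decimation `y'` of `w`, and the whole sample is a factor of `phi a ρ (y' d)`.
Decimation gives `v ∈ F(Σ,Q)`, and applied to `c v` it gives `L(u) = L(v)`.
-/

lemma exists_eq_mul_add_pred_of_dvd {ρ n : ℕ} (h : ρ ∣ n + 1) : ∃ t, n = t * ρ + (ρ - 1) := by
  obtain ⟨c, hc⟩ := h
  rcases c with _ | c
  · simp at hc
  · have hmul : ρ * (c + 1) = c * ρ + ρ := by ring
    have hρ : ρ ≠ 0 := by rintro rfl; simp at hc
    exact ⟨c, by omega⟩

lemma dvd_sub_add_iff_mod {ρ i : ℕ} (hi : i < ρ) (n : ℕ) : ρ ∣ ρ - i + n ↔ n % ρ = i := by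
  have hmod := Nat.mod_lt n (show 0 < ρ by omega)
  conv_lhs => rw [← Nat.mod_add_div n ρ, ← Nat.add_assoc, Nat.dvd_add_left (dvd_mul_right _ _)]
  constructor
  · rintro ⟨c, hc⟩
    rcases c with _ | _ | c
    · omega
    · omega
    · nlinarith [Nat.sub_le ρ i]
  · intro h
    rw [h, Nat.sub_add_cancel hi.le]

lemma exists_lt_forall_dvd_add_mul_iff {ρ σ : ℕ} (hρ : ρ.Prime) (hσ : ¬ ρ ∣ σ) (c : ℕ) :
    ∃ j₀ < ρ, ∀ j, ρ ∣ c + j * σ ↔ j % ρ = j₀ := by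
  have := Fact.mk hρ
  have hσ0 : (σ : ZMod ρ) ≠ 0 := by rwa [Ne, ZMod.natCast_eq_zero_iff]
  refine ⟨(-c * (σ : ZMod ρ)⁻¹).val, ZMod.val_lt _, fun j => ?_⟩
  calc ρ ∣ c + j * σ ↔ ((c + j * σ : ℕ) : ZMod ρ) = 0 := (ZMod.natCast_eq_zero_iff _ _).symm
    _ ↔ (j : ZMod ρ) = -c * (σ : ZMod ρ)⁻¹ := by
      push_cast
      rw [eq_mul_inv_iff_mul_eq₀ hσ0]
      constructor <;> intro h <;> linear_combination h
    _ ↔ j % ρ = (-c * (σ : ZMod ρ)⁻¹).val := by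
      conv_lhs => rw [← ZMod.natCast_zmod_val (-(c : ZMod ρ) * (σ : ZMod ρ)⁻¹)]
      rw [ZMod.natCast_eq_natCast_iff', Nat.mod_eq_of_lt (ZMod.val_lt _)]

lemma not_dvd_add_one_of_dvd {q n : ℕ} (hq : 2 ≤ q) (h : q ∣ n) : ¬ q ∣ n + 1 := fun h' =>
  absurd (Nat.le_of_dvd one_pos ((Nat.dvd_add_right h).1 h')) (by omega)

lemma eq_two_of_dvd_of_dvd_add_two {q n : ℕ} (hq : 2 ≤ q) (h : q ∣ n) (h' : q ∣ n + 2) : q = 2 :=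
  le_antisymm (Nat.le_of_dvd two_pos ((Nat.dvd_add_right h).1 h')) hq

section

variable {A : Type*} {Q : Finset ℕ}

lemma List.ext_getD {l₁ l₂ : List A} (d : A) (hlen : l₁.length = l₂.length)
    (h : ∀ i < l₁.length, l₁.getD i d = l₂.getD i d) : l₁ = l₂ :=
  List.ext_getElem hlen fun i h₁ h₂ => by
    simpa only [List.getD_eq_getElem _ _ h₁, List.getD_eq_getElem _ _ h₂] using h i h₁

lemma List.getD_eq_getD_of_lt {l : List A} {i : ℕ} (hi : i < l.length) (d d' : A) :
    l.getD i d = l.getD i d' := by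
  rw [List.getD_eq_getElem _ _ hi, List.getD_eq_getElem _ _ hi]

lemma List.getD_take_drop {l : List A} {s t n : ℕ} (hn : n < t) (d : A) :
    ((l.drop s).take t).getD n d = l.getD (s + n) d := by
  simp [List.getD_eq_getElem?_getD, hn]

lemma List.getD_append_append_length {s x t : List A} {e : ℕ} (he : e < x.length) (d : A) :
    (s ++ x ++ t).getD (s.length + e) d = x.getD e d := by
  rw [List.append_assoc, List.getD_append_right _ _ _ _ (by omega), Nat.add_sub_cancel_left,
    List.getD_append _ _ _ _ he]

section Phi

variable (a : A) (q : ℕ)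

@[simp]
lemma phi_nil : phi a q ([] : List A) = [] := rfl

lemma phi_cons (b : A) (w : List A) :
    phi a q (b :: w) = List.replicate (q - 1) a ++ b :: phi a q w := by
  simp [phi]

lemma phi_append (u v : List A) : phi a q (u ++ v) = phi a q u ++ phi a q v := by
  simp [phi]

variable {q}

lemma length_phi (hq : 1 ≤ q) (w : List A) : (phi a q w).length = q * w.length := by
  induction w with
  | nil => simp
  | cons b w ih =>
    simp only [phi_cons, List.length_append, List.length_replicate, List.length_cons, ih]
    grind

lemma phi_replicate (hq : 1 ≤ q) (n : ℕ) :
    phi a q (List.replicate n a) = List.replicate (q * n) a := by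
  induction n with
  | zero => simp
  | succ n ih =>
    rw [List.replicate_succ, phi_cons, ih, ← List.replicate_succ, ← List.replicate_add]
    congr 1
    grind

lemma getD_phi (hq : 1 ≤ q) (w : List A) (i : ℕ) :
    (phi a q w).getD i a = if q ∣ i + 1 then w.getD (i / q) a else a := by
  induction w generalizing i with
  | nil => simp
  | cons b w ih =>
    rw [phi_cons]
    rcases lt_trichotomy i (q - 1) with hi | rfl | hi
    · rw [List.getD_append _ _ _ _ (by simpa), List.getD_replicate _ hi,
        if_neg (Nat.not_dvd_of_pos_of_lt (by omega) (by omega))]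
    · rw [List.getD_append_right _ _ _ _ (by simp)]
      simp [Nat.sub_add_cancel hq, Nat.div_eq_of_lt (by omega : q - 1 < q)]
    · obtain ⟨j, rfl⟩ : ∃ j, i = q + j := ⟨i - q, by omega⟩
      rw [List.getD_append_right _ _ _ _ (by rw [List.length_replicate]; omega),
        List.length_replicate,
        show q + j - (q - 1) = j + 1 by omega, List.getD_cons_succ, ih,
        show q + j + 1 = j + 1 + q by omega]
      simp only [Nat.dvd_add_self_right, Nat.add_div_left _ (by omega : 0 < q),
        List.getD_cons_succ]

lemma getD_phi_of_not_dvd (hq : 1 ≤ q) (w : List A) {i : ℕ} (h : ¬ q ∣ i + 1) :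
    (phi a q w).getD i a = a := by
  rw [getD_phi a hq, if_neg h]

lemma getD_phi_mul_add (hq : 1 ≤ q) (w : List A) (j : ℕ) :
    (phi a q w).getD (j * q + (q - 1)) a = w.getD j a := by
  rw [getD_phi a hq, if_pos ⟨j + 1, by grind⟩]
  congr 1
  rw [Nat.add_comm, Nat.add_mul_div_right _ _ (by omega), Nat.div_eq_of_lt (by omega),
    Nat.zero_add]

lemma getD_phi_eq_or_getD_succ_eq (hq : 2 ≤ q) (w : List A) (i : ℕ) :
    (phi a q w).getD i a = a ∨ (phi a q w).getD (i + 1) a = a := by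
  by_contra! h
  have h₁ : q ∣ i + 1 := by_contra fun hn => h.1 (getD_phi_of_not_dvd a (by omega) w hn)
  have h₂ : q ∣ i + 1 + 1 := by_contra fun hn => h.2 (getD_phi_of_not_dvd a (by omega) w hn)
  have := Nat.le_of_dvd one_pos ((Nat.dvd_add_right h₁).1 h₂)
  omega

end Phi

section Language

lemma phi_infix (a : A) (q : ℕ) {u v : List A} (h : u <:+: v) : phi a q u <:+: phi a q v := by
  obtain ⟨s, t, rfl⟩ := h
  exact ⟨phi a q s, phi a q t, by simp only [phi_append]⟩

lemma IsL.mem_FQ {z : List A} (hz : IsL Q z) : z ∈ FQ A Q := ⟨z, hz, List.infix_refl z⟩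

lemma mem_FQ_of_infix {u v : List A} (h : u <:+: v) (hv : v ∈ FQ A Q) : u ∈ FQ A Q := by
  obtain ⟨z, hz, hvz⟩ := hv
  exact ⟨z, hz, h.trans hvz⟩

lemma phi_mem_FQ (a : A) {q : ℕ} (hq : q ∈ Q) {u : List A} (hu : u ∈ FQ A Q) :
    phi a q u ∈ FQ A Q := by
  obtain ⟨z, hz, h⟩ := hu
  exact ⟨_, hz.step a q hq, phi_infix a q h⟩

lemma nonempty_of_mem_FQ_of_two_le_length {u : List A} (hu : u ∈ FQ A Q)
    (h : 2 ≤ u.length) : Q.Nonempty := by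
  obtain ⟨z, hz, hinf⟩ := hu
  cases hz with
  | base c => have := hinf.length_le; simp only [List.length_singleton] at this; omega
  | step a q hq _ => exact ⟨q, hq⟩

lemma replicate_mem_FQ {q : ℕ} (hq : q ∈ Q) (hq2 : 2 ≤ q) (a : A) (n : ℕ) :
    List.replicate n a ∈ FQ A Q := by
  have hpow : ∀ t, IsL Q (List.replicate (q ^ t) a) := by
    intro t
    induction t with
    | zero => exact IsL.base a
    | succ t ih => simpa [phi_replicate a (by omega : 1 ≤ q), pow_succ'] using ih.step a q hq
  obtain ⟨t, ht⟩ : ∃ t, n ≤ q ^ t := ⟨n, (Nat.lt_pow_self hq2).le⟩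
  refine mem_FQ_of_infix (List.IsPrefix.isInfix ⟨List.replicate (q ^ t - n) a, ?_⟩)
    (hpow t).mem_FQ
  rw [← List.replicate_add, Nat.add_sub_cancel' ht]

lemma IsL.exists_cons_append_infix (hQ2 : ∀ q ∈ Q, 2 ≤ q) (hne : Q.Nonempty) {z : List A}
    (hz : IsL Q z) : ∃ c d z', IsL Q z' ∧ c :: z ++ [d] <:+: z' := by
  induction hz with
  | base c =>
    obtain ⟨q, hq⟩ := hne
    obtain ⟨r, rfl⟩ : ∃ r, q = r + 2 := ⟨q - 2, by have := hQ2 q hq; omega⟩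
    refine ⟨c, c, _, ((IsL.base c).step c _ hq).step c _ hq,
      List.IsPrefix.isInfix ⟨List.replicate (r * r + 4 * r + 1) c, ?_⟩⟩
    have h : phi c (r + 2) (phi c (r + 2) [c]) = List.replicate (3 + (r * r + 4 * r + 1)) c := by
      rw [← List.replicate_one, phi_replicate c (by omega), phi_replicate c (by omega)]
      congr 1
      ring
    rw [h, List.replicate_add 3]
    rfl
  | step a q hq _ ih =>
    obtain ⟨c, d, z', hz', hinf⟩ := ih
    obtain ⟨r, rfl⟩ : ∃ r, q = r + 2 := ⟨q - 2, by have := hQ2 q hq; omega⟩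
    refine ⟨c, a, _, hz'.step a _ hq, List.IsInfix.trans
      ⟨List.replicate (r + 1) a, List.replicate r a ++ [d], ?_⟩ (phi_infix a _ hinf)⟩
    simp [phi_append, phi_cons, List.replicate_succ]

lemma exists_cons_append_mem_FQ (hQ2 : ∀ q ∈ Q, 2 ≤ q) (hne : Q.Nonempty) {u : List A}
    (hu : u ∈ FQ A Q) : ∃ c d, c :: u ++ [d] ∈ FQ A Q := by
  obtain ⟨z, hz, s, t, rfl⟩ := hu
  obtain ⟨c, d, z', hz', hinf⟩ := hz.exists_cons_append_infix hQ2 hne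
  obtain ⟨c', s', hs⟩ : ∃ c' s', c :: s = s' ++ [c'] :=
    ⟨_, _, (List.dropLast_append_getLast (List.cons_ne_nil c s)).symm⟩
  obtain ⟨d', t', ht⟩ : ∃ d' t', t ++ [d] = d' :: t' := by cases t <;> simp
  refine ⟨c', d', z', hz', List.IsInfix.trans ⟨s', t', ?_⟩ hinf⟩
  calc s' ++ (c' :: u ++ [d']) ++ t' = (s' ++ [c']) ++ u ++ (d' :: t') := by simp
    _ = c :: (s ++ u ++ t) ++ [d] := by rw [← hs, ← ht]; simp

end Language

section Decimation

def decimate (z : List A) (a : A) (p σ n : ℕ) : List A :=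
  (List.range n).map fun j => z.getD (p + j * σ) a

/-- From position `p` on, `z` reads `y₀ a^(σ-1) y₁ ⋯ a^(σ-1) yₖ`,
where `y = decimate z a p σ (k + 1)`. -/
def IsPadded (z : List A) (a : A) (p σ k : ℕ) : Prop :=
  p + k * σ < z.length ∧ ∀ e ≤ k * σ, ¬ σ ∣ e → z.getD (p + e) a = a

variable {z w : List A} {a : A} {p σ k : ℕ}

@[simp]
lemma length_decimate {n : ℕ} : (decimate z a p σ n).length = n := by simp [decimate]

lemma getD_decimate {n j : ℕ} (hj : j < n) :
    (decimate z a p σ n).getD j a = z.getD (p + j * σ) a := by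
  simp [decimate, hj]

lemma decimate_infix (hlen : p + k * σ < z.length) (h : σ = 1 ∨ k = 0) :
    decimate z a p σ (k + 1) <:+: z := by
  have hk : p + k < z.length := by rcases h with rfl | rfl <;> simpa using hlen
  suffices decimate z a p σ (k + 1) = (z.drop p).take (k + 1) from
    this ▸ (List.take_prefix _ _).isInfix.trans (List.drop_suffix _ _).isInfix
  refine List.ext_getD a ?_ fun j hj => ?_
  · simp only [length_decimate, List.length_take, List.length_drop]
    omega
  have hj' : j < k + 1 := by simpa using hj
  rw [getD_decimate hj']
  have : j * σ = j := by rcases h with rfl | rfl <;> simp_all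
  simp [this, List.getD_eq_getElem?_getD, hj']

lemma decimate_phi_eq_replicate {ρ n : ℕ} (hρ : 1 ≤ ρ) (h : ∀ j < n, ¬ ρ ∣ p + j * σ + 1) :
    decimate (phi a ρ w) a p σ n = List.replicate n a := by
  refine List.eq_replicate_iff.2 ⟨length_decimate, fun b hb => ?_⟩
  obtain ⟨j, hj, rfl⟩ := List.mem_map.1 hb
  exact getD_phi_of_not_dvd a hρ w (h j (List.mem_range.1 hj))

/-- Each sample is adjacent to a gap letter `a ≠ α`, and `phi α ρ w` has no two adjacent letters
other than `α`. -/
lemma decimate_phi_of_ne {α : A} (hαa : α ≠ a) {ρ : ℕ} (hρ : 2 ≤ ρ) (hσ : 2 ≤ σ) (hk : 1 ≤ k)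
    (hpad : IsPadded (phi α ρ w) a p σ k) :
    decimate (phi α ρ w) a p σ (k + 1) = List.replicate (k + 1) α := by
  obtain ⟨hlen, hgap⟩ := hpad
  have hgap' : ∀ e ≤ k * σ, ¬ σ ∣ e → (phi α ρ w).getD (p + e) α ≠ α := fun e he hne => by
    rw [List.getD_eq_getD_of_lt (by omega) α a, hgap e he hne]
    exact hαa.symm
  refine List.eq_replicate_iff.2 ⟨length_decimate, fun b hb => ?_⟩
  obtain ⟨j, hj, rfl⟩ := List.mem_map.1 hb
  have hjk : j * σ ≤ k * σ := Nat.mul_le_mul_right σ (by rw [List.mem_range] at hj; omega)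
  rw [List.getD_eq_getD_of_lt (by omega) a α]
  rcases Nat.eq_zero_or_pos j with rfl | hj0
  · rw [Nat.zero_mul, Nat.add_zero]
    refine (getD_phi_eq_or_getD_succ_eq α hρ w p).resolve_right (hgap' 1 (by nlinarith) ?_)
    exact Nat.not_dvd_of_pos_of_lt one_pos (by omega)
  · have hσj : σ ≤ j * σ := Nat.le_mul_of_pos_left σ hj0
    have hdvd : σ ∣ j * σ := dvd_mul_left σ j
    generalize j * σ = m at *
    have hn : ¬ σ ∣ m - 1 := fun hd => by
      have := Nat.le_of_dvd (by omega) (Nat.dvd_sub hdvd hd)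
      omega
    have := (getD_phi_eq_or_getD_succ_eq α hρ w (p + (m - 1))).resolve_left
      (hgap' _ (by omega) hn)
    rwa [show p + (m - 1) + 1 = p + m by omega] at this

lemma decimate_phi_mul_add {ρ : ℕ} (hρ : 1 ≤ ρ) (h τ n : ℕ) :
    decimate (phi a ρ w) a (h * ρ + (ρ - 1)) (ρ * τ) n = decimate w a h τ n := by
  refine List.map_congr_left fun j _ => ?_
  rw [show h * ρ + (ρ - 1) + j * (ρ * τ) = (h + j * τ) * ρ + (ρ - 1) by ring,
    getD_phi_mul_add a hρ]

lemma IsPadded.of_phi_mul_add {ρ h τ : ℕ} (hρ : 1 ≤ ρ)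
    (hpad : IsPadded (phi a ρ w) a (h * ρ + (ρ - 1)) (ρ * τ) k) : IsPadded w a h τ k := by
  obtain ⟨hlen, hgap⟩ := hpad
  rw [length_phi a hρ] at hlen
  refine ⟨?_, fun e he hτe => ?_⟩
  · by_contra! hc
    nlinarith
  · have hρe : ¬ ρ * τ ∣ e * ρ := by
      rw [mul_comm e]
      exact fun hd => hτe (Nat.dvd_of_mul_dvd_mul_left (by omega) hd)
    have := hgap (e * ρ) (by nlinarith) hρe
    rwa [show h * ρ + (ρ - 1) + e * ρ = (h + e) * ρ + (ρ - 1) by ring,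
      getD_phi_mul_add a hρ] at this

lemma IsPadded.of_phi_coprime {ρ j₀ h₀ m : ℕ} (hρ : 1 ≤ ρ) (hcop : Nat.Coprime σ ρ)
    (hp : p + j₀ * σ = h₀ * ρ + (ρ - 1)) (hm : j₀ + m * ρ ≤ k)
    (hpad : IsPadded (phi a ρ w) a p σ k) : IsPadded w a h₀ σ m := by
  obtain ⟨hlen, hgap⟩ := hpad
  rw [length_phi a hρ] at hlen
  have hmk : (j₀ + m * ρ) * σ ≤ k * σ := Nat.mul_le_mul_right σ hm
  refine ⟨?_, fun e he hσe => ?_⟩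
  · by_contra! hc
    nlinarith [Nat.mul_le_mul_left ρ hc]
  · have hle : j₀ * σ + e * ρ ≤ k * σ := by nlinarith [Nat.mul_le_mul_right ρ he]
    have hnd : ¬ σ ∣ j₀ * σ + e * ρ := fun hd =>
      hσe (hcop.dvd_of_dvd_mul_right ((Nat.dvd_add_right (dvd_mul_left σ j₀)).1 hd))
    have := hgap _ hle hnd
    rwa [← add_assoc, hp, show h₀ * ρ + (ρ - 1) + e * ρ = (h₀ + e) * ρ + (ρ - 1) by ring,
      getD_phi_mul_add a hρ] at this

/-- Only the samples with index `≡ j₀ (mod ρ)` hit the letters of `w` inside `phi a ρ w`, and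
those are read from `w` with the same stride `σ`. -/
lemma decimate_phi_eq_of_coprime {ρ j₀ h₀ m : ℕ} (hρ : 1 ≤ ρ) (hj₀ : j₀ < ρ)
    (hhit : ∀ j, ρ ∣ p + j * σ + 1 ↔ j % ρ = j₀) (hp : p + j₀ * σ = h₀ * ρ + (ρ - 1))
    (hk : k < j₀ + (m + 1) * ρ) (d : A) :
    decimate (phi a ρ w) a p σ (k + 1) =
      ((phi a ρ (decimate w a h₀ σ (m + 1) ++ [d])).drop (ρ - 1 - j₀)).take (k + 1) := by
  refine List.ext_getD a ?_ fun n hn => ?_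
  · simp only [length_decimate, List.length_take, List.length_drop, length_phi a hρ,
      List.length_append, List.length_singleton]
    have : ρ * (m + 1 + 1) = (m + 1) * ρ + ρ := by ring
    omega
  rw [length_decimate] at hn
  rw [getD_decimate hn, List.getD_take_drop hn]
  by_cases hn' : n % ρ = j₀
  · obtain ⟨t, rfl⟩ : ∃ t, n = j₀ + t * ρ := ⟨n / ρ, by
      have := Nat.mod_add_div n ρ
      rw [hn'] at this
      linarith [mul_comm ρ (n / ρ)]⟩
    have ht : t < m + 1 := by
      by_contra! ht
      nlinarith [Nat.mul_le_mul_right ρ ht]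
    rw [show p + (j₀ + t * ρ) * σ = (h₀ + t * σ) * ρ + (ρ - 1) by
        rw [add_mul, ← add_assoc, hp]; ring,
      getD_phi_mul_add a hρ, show ρ - 1 - j₀ + (j₀ + t * ρ) = t * ρ + (ρ - 1) by omega,
      getD_phi_mul_add a hρ, List.getD_append _ _ _ _ (by simpa using ht), getD_decimate ht]
  · rw [getD_phi_of_not_dvd a hρ w (by rwa [hhit]), getD_phi_of_not_dvd a hρ _
      (by rwa [show ρ - 1 - j₀ + n + 1 = ρ - j₀ + n by omega, dvd_sub_add_iff_mod hj₀])]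

lemma decimate_phi_mem_FQ_of_dvd {ρ : ℕ} (hρQ : ρ ∈ Q) (hρ : 2 ≤ ρ) (hdvd : ρ ∣ σ)
    (ih : ∀ p σ k, 1 ≤ σ → IsPadded w a p σ k → decimate w a p σ (k + 1) ∈ FQ A Q)
    (hσ : 1 ≤ σ) (hpad : IsPadded (phi a ρ w) a p σ k) :
    decimate (phi a ρ w) a p σ (k + 1) ∈ FQ A Q := by
  obtain ⟨τ, rfl⟩ := hdvd
  by_cases hp : ρ ∣ p + 1
  · obtain ⟨h, rfl⟩ := exists_eq_mul_add_pred_of_dvd hp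
    rw [decimate_phi_mul_add (by omega)]
    exact ih h τ k (Nat.pos_of_ne_zero (by rintro rfl; simp at hσ))
      (hpad.of_phi_mul_add (by omega))
  · rw [decimate_phi_eq_replicate (by omega) fun j _ hj => hp ?_]
    · exact replicate_mem_FQ hρQ hρ a _
    · rwa [show p + j * (ρ * τ) + 1 = ρ * (j * τ) + (p + 1) by ring,
        Nat.dvd_add_right (dvd_mul_right _ _)] at hj

lemma decimate_phi_mem_FQ_of_not_dvd (hQ : ∀ q ∈ Q, q.Prime) {ρ : ℕ} (hρQ : ρ ∈ Q)
    (hndvd : ¬ ρ ∣ σ)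
    (ih : ∀ p σ k, 1 ≤ σ → IsPadded w a p σ k → decimate w a p σ (k + 1) ∈ FQ A Q)
    (hσ : 1 ≤ σ) (hpad : IsPadded (phi a ρ w) a p σ k) :
    decimate (phi a ρ w) a p σ (k + 1) ∈ FQ A Q := by
  have hρ := hQ ρ hρQ
  obtain ⟨j₀, hj₀, hhit⟩ := exists_lt_forall_dvd_add_mul_iff hρ hndvd (p + 1)
  replace hhit : ∀ j, ρ ∣ p + j * σ + 1 ↔ j % ρ = j₀ := fun j => by
    rw [add_right_comm]; exact hhit j
  by_cases hk : k < j₀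
  · rw [decimate_phi_eq_replicate hρ.one_le fun j hj hd => by
      rw [hhit, Nat.mod_eq_of_lt (by omega)] at hd; omega]
    exact replicate_mem_FQ hρQ hρ.two_le a _
  obtain ⟨h₀, hp⟩ := exists_eq_mul_add_pred_of_dvd ((hhit j₀).2 (Nat.mod_eq_of_lt hj₀))
  have hm := Nat.div_mul_le_self (k - j₀) ρ
  have hk' := Nat.lt_div_mul_add (a := k - j₀) hρ.pos
  generalize (k - j₀) / ρ = m at hm hk'
  replace hm : j₀ + m * ρ ≤ k := by omega
  replace hk' : k < j₀ + (m + 1) * ρ := by rw [add_mul, one_mul]; omega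
  have hY := ih h₀ σ m hσ (hpad.of_phi_coprime hρ.one_le
    (hρ.coprime_iff_not_dvd.2 hndvd).symm hp hm)
  obtain ⟨c, d, hYd⟩ := exists_cons_append_mem_FQ (fun q hq => (hQ q hq).two_le) ⟨ρ, hρQ⟩ hY
  rw [decimate_phi_eq_of_coprime hρ.one_le hj₀ hhit hp hk' d]
  refine mem_FQ_of_infix ((List.take_prefix _ _).isInfix.trans (List.drop_suffix _ _).isInfix)
    (phi_mem_FQ a hρQ (mem_FQ_of_infix ?_ hYd))
  exact ⟨[c], [], by simp⟩

theorem IsL.decimate_mem_FQ (hQ : ∀ q ∈ Q, q.Prime) (hz : IsL Q z) :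
    ∀ {a : A} {p σ k : ℕ}, 1 ≤ σ → IsPadded z a p σ k → decimate z a p σ (k + 1) ∈ FQ A Q := by
  induction hz with
  | base c =>
    intro a p σ k hσ hpad
    have hk : k = 0 := by
      have := hpad.1
      simp only [List.length_singleton] at this
      nlinarith
    exact mem_FQ_of_infix (decimate_infix hpad.1 (Or.inr hk)) (IsL.base c).mem_FQ
  | step α ρ hρQ hw ih =>
    intro a p σ k hσ hpad
    have hρ := hQ ρ hρQ
    by_cases htriv : σ = 1 ∨ k = 0
    · exact mem_FQ_of_infix (decimate_infix hpad.1 htriv) (hw.step α ρ hρQ).mem_FQ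
    by_cases hαa : α = a
    · subst hαa
      by_cases hdvd : ρ ∣ σ
      · exact decimate_phi_mem_FQ_of_dvd hρQ hρ.two_le hdvd (fun _ _ _ => ih) hσ hpad
      · exact decimate_phi_mem_FQ_of_not_dvd hQ hρQ hdvd (fun _ _ _ => ih) hσ hpad
    · rw [decimate_phi_of_ne hαa hρ.two_le (by omega) (by omega) hpad]
      exact replicate_mem_FQ hρQ hρ.two_le α _

end Decimation

theorem mem_FQ_of_drop_phi_mem_FQ (hQ : ∀ q ∈ Q, q.Prime) {a : A} {σ : ℕ} (hσ : 1 ≤ σ)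
    {y : List A} (h : (phi a σ y).drop (σ - 1) ∈ FQ A Q) : y ∈ FQ A Q := by
  obtain ⟨z, hz, s, t, hst⟩ := h
  rcases y with _ | ⟨b, y⟩
  · exact ⟨z, hz, List.nil_infix⟩
  set x := (phi a σ (b :: y)).drop (σ - 1) with hx
  have hxlen : x.length = y.length * σ + 1 := by
    simp only [hx, List.length_drop, length_phi a hσ, List.length_cons]
    have : σ * (y.length + 1) = y.length * σ + σ := by ring
    omega
  have hzx : ∀ e ≤ y.length * σ,
      z.getD (s.length + e) a = (phi a σ (b :: y)).getD (e + (σ - 1)) a := fun e he => by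
    rw [← hst, List.getD_append_append_length (by omega), hx]
    simp [List.getD_eq_getElem?_getD, add_comm]
  have hpad : IsPadded z a s.length σ y.length := by
    refine ⟨by rw [← hst]; simp only [List.length_append]; omega, fun e he hσe => ?_⟩
    rw [hzx e he, getD_phi_of_not_dvd a hσ _]
    rwa [show e + (σ - 1) + 1 = e + σ by omega, Nat.dvd_add_self_right]
  convert hz.decimate_mem_FQ hQ hσ hpad using 1
  refine List.ext_getD a (by simp) fun j hj => ?_
  simp only [List.length_cons] at hj
  rw [getD_decimate hj, hzx _ (Nat.mul_le_mul_right σ (by omega)), getD_phi_mul_add a hσ]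

section Shape

/-- The letter pattern of a factor of some `phi a q w` that starts at a position `≡ r (mod q)`. -/
def HasPhiShape (x : List A) (a : A) (q r : ℕ) : Prop :=
  ∀ i, ¬ q ∣ r + i + 1 → x.getD i a = a

variable {u x : List A} {a : A} {q r : ℕ}

lemma hasPhiShape_phi (hq : 1 ≤ q) (w : List A) : HasPhiShape (phi a q w) a q 0 :=
  fun i hi => getD_phi_of_not_dvd a hq w (by simpa using hi)

lemma hasPhiShape_phi_append_replicate (hq : 1 ≤ q) {v : List A} {m : ℕ}
    (hu : u = phi a q v ++ List.replicate m a) : HasPhiShape u a q 0 := by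
  intro i hi
  subst hu
  by_cases hiv : i < (phi a q v).length
  · rw [List.getD_append _ _ _ _ hiv, hasPhiShape_phi hq v i hi]
  · rw [List.getD_append_right _ _ _ _ (by omega)]
    simp [List.getD_eq_getElem?_getD]

lemma HasPhiShape.of_append {s t : List A} (h : HasPhiShape (s ++ x ++ t) a q r) :
    HasPhiShape x a q (r + s.length) := by
  intro i hi
  by_cases hix : i < x.length
  · rw [← List.getD_append_append_length hix a (s := s) (t := t)]
    exact h _ (by rwa [← Nat.add_assoc])
  · exact List.getD_eq_default _ _ (by omega)

lemma HasPhiShape.zero_of_dvd (hr : q ∣ r) (h : HasPhiShape x a q r) : HasPhiShape x a q 0 :=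
  fun i hi => h i (by simpa [Nat.add_assoc, Nat.dvd_add_right hr] using hi)

lemma HasPhiShape.getElem_zero (h : HasPhiShape x a q 0) (hq : 2 ≤ q) (hx : 0 < x.length) :
    x[0] = a := by
  rw [← List.getD_eq_getElem _ a hx]
  exact h 0 (Nat.not_dvd_of_pos_of_lt one_pos (by omega))

lemma HasPhiShape.dvd_or_dvd {a₁ a₂ : A} {q₁ q₂ r₁ r₂ i : ℕ} (h₁ : HasPhiShape x a₁ q₁ r₁)
    (h₂ : HasPhiShape x a₂ q₂ r₂) (hne : a₁ ≠ a₂) (hi : i < x.length) :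
    q₁ ∣ r₁ + i + 1 ∨ q₂ ∣ r₂ + i + 1 := by
  by_contra! h
  have e₁ := h₁ i h.1
  have e₂ := h₂ i h.2
  rw [List.getD_eq_getElem _ _ hi] at e₁ e₂
  exact hne (e₁.symm.trans e₂)

/-- Every letter of `x` differs from `a₁` or from `a₂`, and no shape allows two adjacent letters
other than its own; so the two shapes alternate along `x`, which forces `q₂ = 2`, and `¬ q₁ ∣ r₁`
leaves no room for a fourth letter. -/
lemma HasPhiShape.hasPhiShape_two_of_ne {a₁ a₂ : A} {q₁ q₂ r₁ r₂ : ℕ} (h₁ : HasPhiShape x a₁ q₁ r₁)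
    (h₂ : HasPhiShape x a₂ q₂ r₂) (hne : a₁ ≠ a₂) (hq₁ : 2 ≤ q₁) (hq₂ : 2 ≤ q₂)
    (hr₁ : ¬ q₁ ∣ r₁) (hx : 3 ≤ x.length) (h₂₀ : q₂ ∣ r₂ + 0 + 1) :
    q₂ = 2 ∧ HasPhiShape x a₁ 2 0 := by
  have cover := fun i (hi : i < x.length) => h₁.dvd_or_dvd h₂ hne hi
  have h₁₁ : q₁ ∣ r₁ + 1 + 1 :=
    (cover 1 (by omega)).resolve_right (not_dvd_add_one_of_dvd hq₂ h₂₀)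
  have h₂₂ : q₂ ∣ r₂ + 2 + 1 :=
    (cover 2 (by omega)).resolve_left (not_dvd_add_one_of_dvd hq₁ h₁₁)
  have hq₂2 : q₂ = 2 := eq_two_of_dvd_of_dvd_add_two hq₂ h₂₀ h₂₂
  refine ⟨hq₂2, fun i hi => ?_⟩
  by_cases hix : i < x.length
  swap
  · exact List.getD_eq_default _ _ (by omega)
  refine h₁ i fun hd => ?_
  obtain ⟨j, rfl⟩ : ∃ j, i = 2 * j := ⟨i / 2, by omega⟩
  rcases j with _ | _ | j
  · exact not_dvd_add_one_of_dvd hq₁ hd h₁₁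
  · exact not_dvd_add_one_of_dvd hq₁ h₁₁ hd
  · have h₁₃ : q₁ ∣ r₁ + 3 + 1 := (cover 3 (by omega)).resolve_right
      (not_dvd_add_one_of_dvd hq₂ h₂₂)
    have hq₁2 : q₁ = 2 := eq_two_of_dvd_of_dvd_add_two hq₁ h₁₁ h₁₃
    subst hq₁2
    exact hr₁ ((Nat.dvd_add_left (dvd_refl 2)).1 h₁₁)

lemma exists_hasPhiShape_of_mem_Lext (hQ2 : ∀ q ∈ Q, 2 ≤ q) {c : A} (hc : c ∈ Lext A Q u)
    (hu : 1 ≤ u.length) :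
    (∃ a, ∃ q ∈ Q, HasPhiShape u a q 0) ∨ ∃ q ∈ Q, ∃ r, ¬ q ∣ r ∧ HasPhiShape u c q r := by
  obtain ⟨z, hz, s, t, hst⟩ := hc
  cases hz with
  | base b =>
    have := congrArg List.length hst
    simp only [List.length_append, List.length_cons, List.length_nil] at this
    omega
  | step α ρ hρQ w =>
    have hcu : HasPhiShape (c :: u) α ρ (0 + s.length) :=
      HasPhiShape.of_append (t := t) (by rw [hst]; exact hasPhiShape_phi (by grind) _)
    have hu' : HasPhiShape u α ρ (0 + s.length + 1) :=
      HasPhiShape.of_append (s := [c]) (t := []) (by simpa using hcu)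
    by_cases hr : ρ ∣ 0 + s.length + 1
    · exact Or.inl ⟨α, ρ, hρQ, hu'.zero_of_dvd hr⟩
    · have hcα : c = α := by simpa using hcu 0 (by simpa using hr)
      exact Or.inr ⟨ρ, hρQ, _, hr, hcα ▸ hu'⟩

lemma exists_hasPhiShape_of_isSpecial (hQ2 : ∀ q ∈ Q, 2 ≤ q) (hu : IsSpecial A Q u)
    (h3 : 3 ≤ u.length) : ∃ a, ∃ q ∈ Q, HasPhiShape u a q 0 := by
  obtain ⟨c, d, hcd⟩ :=
    exists_cons_append_mem_FQ hQ2 (nonempty_of_mem_FQ_of_two_le_length hu.1 (by omega)) hu.1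
  have hne : (Lext A Q u).Nonempty := ⟨c, mem_FQ_of_infix ⟨[], [d], by simp⟩ hcd⟩
  obtain ⟨c₁, hc₁, c₂, hc₂, hc⟩ : (Lext A Q u).Nontrivial := by
    by_contra h
    rw [Set.not_nontrivial_iff] at h
    exact hu.2 (Set.ncard_eq_one.2 ⟨_, h.eq_singleton_of_mem hne.some_mem⟩)
  rcases exists_hasPhiShape_of_mem_Lext hQ2 hc₁ (by omega) with h | ⟨q₁, hq₁, r₁, hr₁, h₁⟩
  · exact h
  rcases exists_hasPhiShape_of_mem_Lext hQ2 hc₂ (by omega) with h | ⟨q₂, hq₂, r₂, hr₂, h₂⟩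
  · exact h
  rcases h₁.dvd_or_dvd h₂ hc (i := 0) (by omega) with h | h
  · obtain ⟨rfl, hs⟩ := h₂.hasPhiShape_two_of_ne h₁ hc.symm (hQ2 _ hq₂) (hQ2 _ hq₁) hr₂ h3 h
    exact ⟨c₂, 2, hq₁, hs⟩
  · obtain ⟨rfl, hs⟩ := h₁.hasPhiShape_two_of_ne h₂ hc (hQ2 _ hq₁) (hQ2 _ hq₂) hr₁ h3 h
    exact ⟨c₁, 2, hq₂, hs⟩

end Shape

section Representation

variable {u v : List A} {a : A} {q m : ℕ}

lemma length_eq_div_of_eq_phi_append_replicate (hq : 1 ≤ q) (hm : m < q)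
    (hu : u = phi a q v ++ List.replicate m a) : v.length = u.length / q := by
  rw [hu, List.length_append, length_phi a hq, List.length_replicate, Nat.mul_add_div (by omega),
    Nat.div_eq_of_lt hm, Nat.add_zero]

lemma exists_eq_phi_append_replicate (hQ : ∀ q ∈ Q, q.Prime) (hq : 1 ≤ q) (huF : u ∈ FQ A Q)
    (h : HasPhiShape u a q 0) : ∃ v ∈ FQ A Q, u = phi a q v ++ List.replicate (u.length % q) a := by
  set v := decimate u a (q - 1) q (u.length / q)
  have hdm := Nat.div_add_mod u.length q
  have hmq := Nat.mod_lt u.length (show 0 < q by omega)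
  have hu : u = phi a q v ++ List.replicate (u.length % q) a := by
    refine List.ext_getD a (by simp [v, length_phi a hq, hdm]) fun i hi => ?_
    by_cases hd : q ∣ i + 1
    · obtain ⟨t, rfl⟩ := exists_eq_mul_add_pred_of_dvd hd
      have hc := mul_comm q (u.length / q)
      have ht : t < u.length / q := by
        by_contra! ht
        have := Nat.mul_le_mul_right q ht
        omega
      have htq : t * q + (q - 1) < (phi a q v).length := by
        have := Nat.mul_le_mul_right q ht
        rw [length_phi a hq, length_decimate]
        rw [Nat.succ_mul] at this
        omega
      rw [List.getD_append _ _ _ _ htq, getD_phi_mul_add a hq, getD_decimate ht, add_comm]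
    · rw [h i (by simpa using hd)]
      by_cases hiv : i < (phi a q v).length
      · rw [List.getD_append _ _ _ _ hiv, getD_phi_of_not_dvd a hq _ hd]
      · rw [List.getD_append_right _ _ _ _ (by omega)]
        simp [List.getD_eq_getElem?_getD]
  refine ⟨v, mem_FQ_of_drop_phi_mem_FQ hQ (a := a) hq (mem_FQ_of_infix ?_ huF), hu⟩
  rw [hu]
  exact (List.drop_suffix _ _).isInfix.trans (List.prefix_append _ _).isInfix

lemma Lext_eq_of_eq_phi_append_replicate (hQ : ∀ q ∈ Q, q.Prime) (hq : q ∈ Q) (hm : m < q)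
    (hu : u = phi a q v ++ List.replicate m a) : Lext A Q u = Lext A Q v := by
  have hq1 := (hQ q hq).one_le
  ext c
  constructor
  · intro hc
    refine mem_FQ_of_drop_phi_mem_FQ hQ (a := a) hq1 (mem_FQ_of_infix ?_ hc)
    rw [phi_cons, List.drop_left' (List.length_replicate ..), hu]
    exact (List.prefix_append _ _).isInfix
  · intro hc
    obtain ⟨c', d, hcd⟩ := exists_cons_append_mem_FQ (fun q hq => (hQ q hq).two_le) ⟨q, hq⟩ hc
    refine mem_FQ_of_infix ⟨List.replicate (q - 1) a, List.replicate (q - 1 - m) a ++ [d], ?_⟩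
      (phi_mem_FQ a hq (mem_FQ_of_infix (⟨[c'], [], by simp⟩ : c :: v ++ [d] <:+: _) hcd))
    rw [hu]
    simp only [phi_append, phi_cons, phi_nil, List.cons_append, List.append_assoc]
    rw [← List.append_assoc (List.replicate m a), ← List.replicate_add,
      Nat.add_sub_cancel' (by omega)]

end Representation

end

theorem special_word_unique_representation_general {A : Type*} (Q : Finset ℕ)
    (hQ : ∀ q ∈ Q, Nat.Prime q)
    (u : List A) (hu : IsSpecial A Q u) (hlen : 3 ≤ u.length) :
    ∃! aQ : A × Finset ℕ,
      aQ.2 ⊆ Q ∧ aQ.2.Nonempty ∧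
      (∀ q ∈ Q, (q ∈ aQ.2 ↔
        ∃ (v : List A) (m : ℕ), v ∈ FQ A Q ∧ m < q ∧
          u = phi aQ.1 q v ++ List.replicate m aQ.1)) ∧
      (∀ q ∈ aQ.2, ∀ (v : List A) (m : ℕ), v ∈ FQ A Q → m < q →
        u = phi aQ.1 q v ++ List.replicate m aQ.1 →
          v.length = u.length / q ∧ Lext A Q u = Lext A Q v) := by
  classical
  have hQ2 : ∀ q ∈ Q, 2 ≤ q := fun q hq => (hQ q hq).two_le
  obtain ⟨a, q₀, hq₀, hshape⟩ := exists_hasPhiShape_of_isSpecial hQ2 hu hlen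
  set S := Q.filter fun q => ∃ (v : List A) (m : ℕ), v ∈ FQ A Q ∧ m < q ∧
    u = phi a q v ++ List.replicate m a
  refine ⟨(a, S), ⟨Finset.filter_subset _ _, ?_, fun q hq => by simp [S, hq], ?_⟩, ?_⟩
  · obtain ⟨v, hv, hrep⟩ := exists_eq_phi_append_replicate hQ (hQ q₀ hq₀).one_le hu.1 hshape
    exact ⟨q₀, Finset.mem_filter.2 ⟨hq₀, v, _, hv, Nat.mod_lt _ (hQ q₀ hq₀).pos, hrep⟩⟩
  · intro q hq v m _ hm hrep
    have hqQ := (Finset.mem_filter.1 hq).1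
    exact ⟨length_eq_div_of_eq_phi_append_replicate (hQ q hqQ).one_le hm hrep,
      Lext_eq_of_eq_phi_append_replicate hQ hqQ hm hrep⟩
  · rintro ⟨a', S'⟩ ⟨hS', ⟨q', hq'⟩, hiff, -⟩
    dsimp only at hS' hq' hiff
    obtain ⟨v, m, -, -, hrep⟩ := (hiff q' (hS' hq')).1 hq'
    have ha : a' = a := by
      rw [← (hasPhiShape_phi_append_replicate (hQ q' (hS' hq')).one_le hrep).getElem_zero
        (hQ2 q' (hS' hq')) (by omega), hshape.getElem_zero (hQ2 q₀ hq₀) (by omega)]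
    rw [ha] at hiff
    refine Prod.ext ha (Finset.ext fun q => ?_)
    simp only [S, Finset.mem_filter]
    exact ⟨fun h => ⟨hS' h, (hiff q (hS' h)).1 h⟩, fun h => (hiff q h.1).2 h.2⟩

/-- **Corollary 1.** For each special word `u` of `F(Σ,Q)` of
length `n ≥ 3` there are a unique letter `a` and a unique (nonempty) subset
`Q(u) ⊆ Q` such that `u = φ_{a,q}(v_q)·a^m` (with `v_q ∈ F(Σ,Q)`, `0 ≤ m < q`)
holds exactly for the `q ∈ Q(u)`; moreover every such representation has
`|v_q| = ⌊n/q⌋` and `L(u) = L(v_q)`. -/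
theorem special_word_unique_representation {A : Type*} [Fintype A]
    (hd : 2 ≤ Fintype.card A) (Q : Finset ℕ) (hQ : ∀ q ∈ Q, Nat.Prime q)
    (u : List A) (hu : IsSpecial A Q u) (hlen : 3 ≤ u.length) :
    ∃! aQ : A × Finset ℕ,
      aQ.2 ⊆ Q ∧ aQ.2.Nonempty ∧
      (∀ q ∈ Q, (q ∈ aQ.2 ↔
        ∃ (v : List A) (m : ℕ), v ∈ FQ A Q ∧ m < q ∧
          u = phi aQ.1 q v ++ List.replicate m aQ.1)) ∧
      (∀ q ∈ aQ.2, ∀ (v : List A) (m : ℕ), v ∈ FQ A Q → m < q →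
        u = phi aQ.1 q v ++ List.replicate m aQ.1 →
          v.length = u.length / q ∧ Lext A Q u = Lext A Q v) :=
  special_word_unique_representation_general Q hQ u hu hlen
end

section
/- Let s : [0,∞) → ℝ satisfy s(x) = s(⌊x⌋) for all x ≥ 0 and the equation s(x) = d·D_Q s(x) for all x ≥ 3, where Q is a finite set of primes and d ≥ 2. If s(3) ≥ s(2) ≥ s(1) ≥ s(0) > 0, then the function s is non-decreasing on (0,∞). -/
/-!
Put `t n = s n` and `Δ n = t n - t (n - 1)`. For `n ≥ 4`, subtracting the recursion at `n - 1`
from the one at `n` keeps only the subsets `T ⊆ Q` whose product divides `n`, so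
`Δ n = d · Σ_{∅ ≠ T ⊆ K} (-1)^{|T|+1} Δ(n / ∏ T)` with `K` the primes of `Q` dividing `n`.
By strong induction every sieve sum `Σ_{T ⊆ S} (-1)^{|T|} Δ(n / ∏ T)`, `S ⊆ K`, is nonnegative:
adding a prime `p` to `S` subtracts the sieve sum at `n / p`, nonnegative by induction, so the sum
over `K` is the smallest one, and the recursion pins it at `(1 - 1/d) Δ n ≥ 0`. The induction
breaks down only for `n = p r` with primes `p ≠ r`, `r ∈ {2, 3}`; there the four sieve sums are
controlled by `Δ p = d Δ 1` (for `p ≥ 5`) or by `s 3 = d (2 s 1 - s 0)` (for `n = 6`).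
-/

/-- The operator `D_R f(x) = Σ_{i=1}^{|R|} (-1)^{i+1} Σ_{{s_1,…,s_i} ⊆ R} f(x/(s_1⋯s_i))`,
where the inner sum is over all `i`-element subsets of `R` (equivalently, a signed
sum over all nonempty subsets of `R`). -/
noncomputable def DOp (R : Finset ℕ) (f : ℝ → ℝ) (x : ℝ) : ℝ :=
  ∑ T ∈ R.powerset.erase ∅, (-1 : ℝ) ^ (T.card + 1) * f (x / ∏ q ∈ T, (q : ℝ))

open Finset

/-- With truncated subtraction, `bdiff t 0 = 0`. -/
def bdiff (t : ℕ → ℝ) (n : ℕ) : ℝ := t n - t (n - 1)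

def sieveSum (g : ℕ → ℝ) (n : ℕ) (S : Finset ℕ) : ℝ :=
  ∑ T ∈ S.powerset, (-1) ^ T.card * g (n / ∏ q ∈ T, q)

section SieveSum

variable (g : ℕ → ℝ) (n : ℕ)

@[simp]
lemma sieveSum_empty : sieveSum g n ∅ = g n := by
  simp [sieveSum]

lemma sieveSum_insert {p : ℕ} {S : Finset ℕ} (hp : p ∉ S) :
    sieveSum g n (insert p S) = sieveSum g n S - sieveSum g (n / p) S := by
  simp only [sieveSum]
  rw [sum_powerset_insert hp, sub_eq_add_neg, ← sum_neg_distrib]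
  congr 1
  refine sum_congr rfl fun T hT => ?_
  have hpT : p ∉ T := fun h => hp (mem_powerset.mp hT h)
  rw [card_insert_of_notMem hpT, prod_insert hpT, ← Nat.div_div_eq_div_mul, pow_succ]
  ring

lemma sieveSum_singleton (p : ℕ) : sieveSum g n {p} = g n - g (n / p) := by
  simpa using sieveSum_insert g n (notMem_empty p)

lemma sieveSum_union_le {K : Finset ℕ}
    (h : ∀ p ∈ K, ∀ S ⊆ K, p ∉ S → 0 ≤ sieveSum g (n / p) S) {S A : Finset ℕ}
    (hS : S ⊆ K) (hA : A ⊆ K) : sieveSum g n (S ∪ A) ≤ sieveSum g n S := by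
  induction A using Finset.induction_on with
  | empty => simp
  | insert p A _ ih =>
    obtain ⟨hpK, hAK⟩ := insert_subset_iff.mp hA
    rw [union_insert]
    by_cases hp : p ∈ S ∪ A
    · rw [insert_eq_of_mem hp]
      exact ih hAK
    · rw [sieveSum_insert g n hp]
      linarith [ih hAK, h p hpK (S ∪ A) (union_subset hS hAK) hp]

lemma sieveSum_nonneg_of_eq_mul_sub {K : Finset ℕ} {d : ℝ} (hd : 1 ≤ d)
    (hfix : g n = d * (g n - sieveSum g n K))
    (h : ∀ p ∈ K, ∀ S ⊆ K, p ∉ S → 0 ≤ sieveSum g (n / p) S) {S : Finset ℕ} (hS : S ⊆ K) :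
    0 ≤ sieveSum g n S := by
  have hKS : sieveSum g n K ≤ sieveSum g n S := by
    simpa [union_eq_right.mpr hS] using sieveSum_union_le g n h hS subset_rfl
  have hK0 : sieveSum g n K ≤ g n := by
    simpa using sieveSum_union_le g n h (empty_subset K) subset_rfl
  have hg : 0 ≤ g n := by
    rw [hfix]
    exact mul_nonneg (by linarith) (by linarith)
  have hK : 0 ≤ sieveSum g n K := by nlinarith
  linarith

end SieveSum

lemma DOp_natCast {Q : Finset ℕ} {f : ℝ → ℝ} (hf : ∀ x, 0 ≤ x → f x = f ⌊x⌋₊) (m : ℕ) :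
    DOp Q f m = f m - sieveSum (fun k => f k) m Q := by
  rw [DOp, sieveSum, ← sum_erase_add _ _ (empty_mem_powerset Q)]
  simp only [card_empty, pow_zero, prod_empty, Nat.div_one, one_mul, sub_add_cancel_right,
    ← sum_neg_distrib]
  refine sum_congr rfl fun T _ => ?_
  rw [hf _ (by positivity), ← Nat.cast_prod, Nat.floor_div_eq_div, pow_succ]
  ring

lemma Nat.Prime.eq_two_or_eq_three {p : ℕ} (hp : p.Prime) (h3 : p ≤ 3) : p = 2 ∨ p = 3 := by
  interval_cases p <;> first | omega | exact absurd hp (by norm_num)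

lemma prod_dvd_iff_subset_filter {Q T : Finset ℕ} (hQ : ∀ q ∈ Q, q.Prime) (hT : T ⊆ Q) (n : ℕ) :
    ∏ q ∈ T, q ∣ n ↔ T ⊆ Q.filter (· ∣ n) := by
  refine ⟨fun h q hq => mem_filter.mpr ⟨hT hq, (dvd_prod_of_mem _ hq).trans h⟩, fun h => ?_⟩
  exact prod_primes_dvd n (fun q hq => (hQ q (hT hq)).prime) fun q hq => (mem_filter.mp (h hq)).2

lemma filter_dvd_prime {Q : Finset ℕ} (hQ : ∀ q ∈ Q, q.Prime) {p : ℕ} (hp : p ∈ Q) :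
    Q.filter (· ∣ p) = {p} := by
  ext q
  simp only [mem_filter, mem_singleton]
  constructor
  · rintro ⟨hq, hqp⟩
    exact (Nat.prime_dvd_prime_iff_eq (hQ q hq) (hQ p hp)).mp hqp
  · rintro rfl
    exact ⟨hp, dvd_rfl⟩

lemma subset_filter_dvd_div {Q S : Finset ℕ} (hQ : ∀ q ∈ Q, q.Prime) {n p : ℕ}
    (hp : p ∈ Q.filter (· ∣ n)) (hS : S ⊆ Q.filter (· ∣ n)) (hpS : p ∉ S) :
    S ⊆ Q.filter (· ∣ n / p) := by
  intro q hq
  obtain ⟨hpQ, hpn⟩ := mem_filter.mp hp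
  obtain ⟨hqQ, hqn⟩ := mem_filter.mp (hS hq)
  have hcop : p.Coprime q :=
    (Nat.coprime_primes (hQ p hpQ) (hQ q hqQ)).mpr fun h => hpS (h ▸ hq)
  exact mem_filter.mpr ⟨hqQ, Nat.dvd_div_of_mul_dvd (hcop.mul_dvd_of_dvd_of_dvd hpn hqn)⟩

lemma eq_empty_or_eq_two_or_eq_three {T : Finset ℕ} (hT : ∀ p ∈ T, p.Prime)
    (h : ∏ p ∈ T, p ≤ 3) : T = ∅ ∨ T = {2} ∨ T = {3} := by
  have hcard : T.card ≤ 1 := by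
    have := pow_card_le_prod T id 2 fun p hp => (hT p hp).two_le
    by_contra hc
    have : 2 ^ 2 ≤ 2 ^ T.card := Nat.pow_le_pow_right (by norm_num) (by omega)
    simp only [id] at *
    omega
  rcases Nat.le_one_iff_eq_zero_or_eq_one.mp hcard with h0 | h1
  · exact Or.inl (card_eq_zero.mp h0)
  · obtain ⟨p, rfl⟩ := card_eq_one.mp h1
    rw [prod_singleton] at h
    rcases (hT p (mem_singleton_self p)).eq_two_or_eq_three h with rfl | rfl <;> simp

lemma sieveSum_three {Q : Finset ℕ} (hQ : ∀ q ∈ Q, q.Prime) (h2 : 2 ∈ Q) (h3 : 3 ∈ Q)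
    (g : ℕ → ℝ) : sieveSum g 3 Q = g 3 - 2 * g 1 + g 0 := by
  have hsplit : sieveSum g 3 Q = (∑ T ∈ Q.powerset, (-1 : ℝ) ^ T.card) * g 0 +
      ∑ T ∈ Q.powerset, (-1 : ℝ) ^ T.card * (g (3 / ∏ q ∈ T, q) - g 0) := by
    rw [sum_mul, ← sum_add_distrib, sieveSum]
    exact sum_congr rfl fun T _ => by ring
  have halt : ∑ T ∈ Q.powerset, (-1 : ℝ) ^ T.card = 0 := by
    exact_mod_cast sum_powerset_neg_one_pow_card_of_nonempty ⟨2, h2⟩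
  have hsupp : ∑ T ∈ Q.powerset, (-1 : ℝ) ^ T.card * (g (3 / ∏ q ∈ T, q) - g 0) =
      ∑ T ∈ {∅, {2}, {3}}, (-1 : ℝ) ^ T.card * (g (3 / ∏ q ∈ T, q) - g 0) := by
    refine (sum_subset ?_ fun T hTQ hT => ?_).symm
    · intro T hT
      simp only [mem_insert, mem_singleton] at hT
      rcases hT with rfl | rfl | rfl <;> simp [h2, h3]
    · have h3T : 3 < ∏ q ∈ T, q := by
        by_contra! hle
        have := eq_empty_or_eq_two_or_eq_three (fun p hp => hQ p (mem_powerset.mp hTQ hp)) hle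
        simp_all
      rw [Nat.div_eq_of_lt h3T, sub_self, mul_zero]
  rw [hsplit, halt, hsupp, sum_insert (by simp), sum_pair (by simp)]
  norm_num
  ring

lemma sub_div_pred_eq (t : ℕ → ℝ) {n : ℕ} (hn : 0 < n) (P : ℕ) :
    t (n / P) - t ((n - 1) / P) = if P ∣ n then bdiff t (n / P) else 0 := by
  obtain ⟨m, rfl⟩ : ∃ m, n = m + 1 := ⟨n - 1, by omega⟩
  rw [Nat.succ_div]
  split_ifs <;> simp [bdiff]

lemma sieveSum_sub_sieveSum_pred {Q : Finset ℕ} (hQ : ∀ q ∈ Q, q.Prime) (t : ℕ → ℝ) {n : ℕ}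
    (hn : 0 < n) :
    sieveSum t n Q - sieveSum t (n - 1) Q = sieveSum (bdiff t) n (Q.filter (· ∣ n)) := by
  simp only [sieveSum, ← sum_sub_distrib, ← mul_sub, sub_div_pred_eq t hn, mul_ite, mul_zero]
  rw [← sum_filter]
  refine sum_congr (ext fun T => ?_) fun _ _ => rfl
  simp only [mem_filter, mem_powerset]
  constructor
  · rintro ⟨hTQ, hdvd⟩
    exact (prod_dvd_iff_subset_filter hQ hTQ n).mp hdvd
  · intro hT
    have hTQ := hT.trans (filter_subset _ Q)
    exact ⟨hTQ, (prod_dvd_iff_subset_filter hQ hTQ n).mpr hT⟩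

section Recursion

variable {Q : Finset ℕ} {d : ℝ} {t : ℕ → ℝ}

lemma bdiff_eq_mul (hQ : ∀ q ∈ Q, q.Prime)
    (hrec : ∀ m, 3 ≤ m → t m = d * (t m - sieveSum t m Q)) {n : ℕ} (hn : 4 ≤ n) :
    bdiff t n = d * (bdiff t n - sieveSum (bdiff t) n (Q.filter (· ∣ n))) := by
  rw [← sieveSum_sub_sieveSum_pred hQ t (by omega), bdiff]
  linear_combination hrec n (by omega) - hrec (n - 1) (by omega)

lemma bdiff_prime (hQ : ∀ q ∈ Q, q.Prime)
    (hrec : ∀ m, 3 ≤ m → t m = d * (t m - sieveSum t m Q)) {p : ℕ} (hp : p ∈ Q) (hp4 : 4 ≤ p) :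
    bdiff t p = d * bdiff t 1 := by
  have h := bdiff_eq_mul hQ hrec hp4
  rwa [filter_dvd_prime hQ hp, sieveSum_singleton, Nat.div_self (hQ p hp).pos,
    sub_sub_cancel] at h

lemma apply_three_eq_mul (hQ : ∀ q ∈ Q, q.Prime)
    (hrec : ∀ m, 3 ≤ m → t m = d * (t m - sieveSum t m Q)) (h2 : 2 ∈ Q) (h3 : 3 ∈ Q) :
    t 3 = d * (2 * t 1 - t 0) := by
  linear_combination hrec 3 le_rfl - d * sieveSum_three hQ h2 h3 t

lemma bdiff_nonneg_and_mul_bdiff_one_le (hQ : ∀ q ∈ Q, q.Prime)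
    (hrec : ∀ m, 3 ≤ m → t m = d * (t m - sieveSum t m Q)) (hd : 2 ≤ d)
    (hbase : ∀ m ≤ 3, 0 ≤ bdiff t m) (ht1 : 0 ≤ t 1) {p r : ℕ} (hp : p ∈ Q) (hr : r ∈ Q)
    (hpr : p ≠ r) (hr3 : r ≤ 3) :
    0 ≤ bdiff t p ∧ d * bdiff t 1 ≤ (d - 1) * (bdiff t p + bdiff t r) := by
  have he := hbase 1 (by norm_num)
  have hc := hbase r hr3
  have hd2 : 0 ≤ (d - 2) * d := mul_nonneg (by linarith) (by linarith)
  by_cases hp4 : 4 ≤ p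
  · rw [bdiff_prime hQ hrec hp hp4]
    exact ⟨by nlinarith, by nlinarith [mul_nonneg hd2 he, mul_nonneg (by linarith : 0 ≤ d - 1) hc]⟩
  · have hp3 : p ≤ 3 := by omega
    obtain ⟨hsum, h2, h3⟩ : bdiff t p + bdiff t r = t 3 - t 1 ∧ 2 ∈ Q ∧ 3 ∈ Q := by
      rcases (hQ p hp).eq_two_or_eq_three hp3 with rfl | rfl <;>
        rcases (hQ r hr).eq_two_or_eq_three hr3 with rfl | rfl
      all_goals first
        | exact absurd rfl hpr
        | exact ⟨by simp only [bdiff]; ring, hp, hr⟩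
        | exact ⟨by simp only [bdiff]; ring, hr, hp⟩
    refine ⟨hbase p hp3, ?_⟩
    have he1 : bdiff t 1 = t 1 - t 0 := rfl
    rw [hsum, apply_three_eq_mul hQ hrec h2 h3, he1]
    rw [he1] at he
    nlinarith [mul_nonneg (sq_nonneg (d - 1)) ht1, mul_nonneg hd2 he]

lemma sieveSum_bdiff_mul_nonneg (hQ : ∀ q ∈ Q, q.Prime)
    (hrec : ∀ m, 3 ≤ m → t m = d * (t m - sieveSum t m Q)) (hd : 2 ≤ d)
    (hbase : ∀ m ≤ 3, 0 ≤ bdiff t m) (ht1 : 0 ≤ t 1) {p r : ℕ} (hp : p ∈ Q) (hr : r ∈ Q)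
    (hpr : p ≠ r) (hr3 : r ≤ 3) (hn : 4 ≤ p * r) {S : Finset ℕ}
    (hS : S ⊆ Q.filter (· ∣ p * r)) : 0 ≤ sieveSum (bdiff t) (p * r) S := by
  have hpP := hQ p hp
  have hrP := hQ r hr
  have hK : Q.filter (· ∣ p * r) = {p, r} := by
    ext q
    simp only [mem_filter, mem_insert, mem_singleton]
    constructor
    · rintro ⟨hq, hqpr⟩
      rcases (Nat.Prime.dvd_mul (hQ q hq)).mp hqpr with h | h
      · exact Or.inl ((Nat.prime_dvd_prime_iff_eq (hQ q hq) hpP).mp h)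
      · exact Or.inr ((Nat.prime_dvd_prime_iff_eq (hQ q hq) hrP).mp h)
    · rintro (rfl | rfl)
      exacts [⟨hp, dvd_mul_right _ _⟩, ⟨hr, dvd_mul_left _ _⟩]
  have hdivp : p * r / p = r := Nat.mul_div_cancel_left r hpP.pos
  have hdivr : p * r / r = p := Nat.mul_div_cancel p hrP.pos
  have hpair : sieveSum (bdiff t) (p * r) {p, r} =
      bdiff t (p * r) - bdiff t p - (bdiff t r - bdiff t 1) := by
    rw [sieveSum_insert _ _ (by simpa using hpr), sieveSum_singleton, sieveSum_singleton, hdivp,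
      hdivr, Nat.div_self hrP.pos]
  have hfix := bdiff_eq_mul hQ hrec hn
  rw [hK, hpair] at hfix
  obtain ⟨hb, hbound⟩ := bdiff_nonneg_and_mul_bdiff_one_le hQ hrec hd hbase ht1 hp hr hpr hr3
  have he := hbase 1 (by norm_num)
  have hc := hbase r hr3
  rw [hK] at hS
  have hS' : (S : Set ℕ) ⊆ {p, r} := by rw [← coe_pair]; exact coe_subset.mpr hS
  rcases Set.subset_pair_iff_eq.mp hS' with h | h | h | h <;> norm_cast at h <;> subst h
  · simp only [sieveSum_empty]; nlinarith
  · rw [sieveSum_singleton, hdivp]; nlinarith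
  · rw [sieveSum_singleton, hdivr]; nlinarith
  · rw [hpair]; nlinarith

lemma sieveSum_bdiff_nonneg (hQ : ∀ q ∈ Q, q.Prime)
    (hrec : ∀ m, 3 ≤ m → t m = d * (t m - sieveSum t m Q)) (hd : 2 ≤ d)
    (hbase : ∀ m ≤ 3, 0 ≤ bdiff t m) (ht1 : 0 ≤ t 1) (n : ℕ) (hn : 4 ≤ n) :
    ∀ S ⊆ Q.filter (· ∣ n), 0 ≤ sieveSum (bdiff t) n S := by
  induction n using Nat.strong_induction_on with
  | _ n ih =>
  by_cases hpair : ∃ p ∈ Q, ∃ r ∈ Q, p ≠ r ∧ r ≤ 3 ∧ n = p * r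
  · obtain ⟨p, hp, r, hr, hpr, hr3, rfl⟩ := hpair
    exact fun S hS => sieveSum_bdiff_mul_nonneg hQ hrec hd hbase ht1 hp hr hpr hr3 hn hS
  refine fun S hS => sieveSum_nonneg_of_eq_mul_sub _ _ (by linarith) (bdiff_eq_mul hQ hrec hn)
    (fun p hpK S' hS' hpS' => ?_) hS
  obtain ⟨hp, hpn⟩ := mem_filter.mp hpK
  have hS'p := subset_filter_dvd_div hQ hpK hS' hpS'
  by_cases h4 : 4 ≤ n / p
  · exact ih _ (Nat.div_lt_self (by omega) (hQ p hp).one_lt) h4 S' hS'p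
  · have hm : 0 < n / p := Nat.div_pos (Nat.le_of_dvd (by omega) hpn) (hQ p hp).pos
    have hS'0 : S' = ∅ := by
      refine eq_empty_of_forall_notMem fun r hrS' => hpair ?_
      obtain ⟨hr, hrm⟩ := mem_filter.mp (hS'p hrS')
      have hrm' : r = n / p := by
        have hle := Nat.le_of_dvd hm hrm
        rcases (hQ r hr).eq_two_or_eq_three (by omega) with rfl | rfl <;>
          interval_cases h : n / p <;> simp_all
      exact ⟨p, hp, r, hr, fun h => hpS' (h ▸ hrS'), by omega, hrm' ▸ (Nat.mul_div_cancel' hpn).symm⟩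
    rw [hS'0, sieveSum_empty]
    exact hbase _ (by omega)

lemma monotone_of_recursion (hQ : ∀ q ∈ Q, q.Prime)
    (hrec : ∀ m, 3 ≤ m → t m = d * (t m - sieveSum t m Q)) (hd : 2 ≤ d)
    (hbase : ∀ m ≤ 3, 0 ≤ bdiff t m) (ht1 : 0 ≤ t 1) : Monotone t := by
  refine monotone_nat_of_le_succ fun n => ?_
  have h : 0 ≤ bdiff t (n + 1) := by
    rcases le_or_gt (n + 1) 3 with h | h
    · exact hbase _ h
    · simpa using sieveSum_bdiff_nonneg hQ hrec hd hbase ht1 (n + 1) h ∅ (empty_subset _)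
  simpa [bdiff] using h

end Recursion

/-- **Lemma 3.** If `s(x) = s(⌊x⌋)` for `x ≥ 0`, `s(x) = d·D_Q s(x)`
for `x ≥ 3`, and `s(3) ≥ s(2) ≥ s(1) ≥ s(0) > 0`, then `s` is non-decreasing on
`(0,∞)`. -/
theorem s_monotone (Q : Finset ℕ) (hQ : ∀ q ∈ Q, Nat.Prime q)
    (d : ℕ) (hd : 2 ≤ d) (s : ℝ → ℝ)
    (hfloor : ∀ x : ℝ, 0 ≤ x → s x = s (⌊x⌋ : ℤ))
    (hrec : ∀ x : ℝ, 3 ≤ x → s x = d * DOp Q s x)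
    (h32 : s 2 ≤ s 3) (h21 : s 1 ≤ s 2) (h10 : s 0 ≤ s 1) (h0 : 0 < s 0) :
    MonotoneOn s (Set.Ioi 0) := by
  have hs : ∀ x, 0 ≤ x → s x = s ⌊x⌋₊ := fun x hx => by
    rw [hfloor x hx, ← Int.natCast_floor_eq_floor hx, Int.cast_natCast]
  have hrec' : ∀ m : ℕ, 3 ≤ m →
      s m = d * (s m - sieveSum (fun k => s k) m Q) := fun m hm => by
    rw [← DOp_natCast hs]
    exact hrec m (by exact_mod_cast hm)
  have hbase : ∀ m ≤ 3, 0 ≤ bdiff (fun k => s k) m := by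
    intro m hm
    interval_cases m <;> simp only [bdiff] <;> norm_num <;> linarith
  have hmono := monotone_of_recursion hQ hrec' (by exact_mod_cast hd) hbase
    (by simp only [Nat.cast_one]; linarith)
  intro x hx y hy hxy
  rw [hs x (le_of_lt hx), hs y (le_of_lt hy)]
  exact hmono (Nat.floor_mono hxy)
end

section
/- Let s : [0,∞) → ℝ satisfy s(x) = s(⌊x⌋) for all x ≥ 0 and s(x) = d·D_Q s(x) for all x ≥ 3. For an integer n > 3, let Q(n) be the set of elements of Q that divide n, and set t(x) = s(x) − s(x−1). Then t(n) = d·D_{Q(n)} t(n). In particular, if no element of Q divides n, then t(n) = 0. -/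
/-!
For a product `P` of primes from `Q`, the step function `s` satisfies
`s((n-1)/P) = s(n/P - 1)` when `P ∣ n` and `s((n-1)/P) = s(n/P)` otherwise, since
`⌊(n-1)/P⌋ = ⌊n/P⌋ - [P ∣ n]`. Subtracting the recurrence at `n - 1` from the one at `n`,
the terms of `D_Q` whose product does not divide `n` therefore cancel, and the remaining
subsets are exactly the subsets of `Q(n)`, because a product of distinct primes divides `n`
iff each of them does.
-/

open Finset

theorem Finset.filter_powerset_prod_dvd {Q : Finset ℕ} (hQ : ∀ q ∈ Q, q.Prime) (n : ℕ) :
    Q.powerset.filter (fun T => ∏ q ∈ T, q ∣ n) = (Q.filter (· ∣ n)).powerset := by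
  ext T
  simp only [mem_filter, mem_powerset, subset_iff]
  constructor
  · rintro ⟨hTQ, hdvd⟩ q hq
    exact ⟨hTQ hq, (dvd_prod_of_mem _ hq).trans hdvd⟩
  · intro hT
    exact ⟨fun q hq => (hT hq).1,
      prod_primes_dvd n (fun q hq => (hQ q (hT hq).1).prime) fun q hq => (hT hq).2⟩

section StepFunction

variable {s : ℝ → ℝ}

theorem apply_natCast_div_eq_apply_natDiv (hs : ∀ x : ℝ, 0 ≤ x → s x = s (⌊x⌋ : ℤ))
    (m P : ℕ) : s ((m : ℝ) / P) = s ((m / P : ℕ) : ℝ) := by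
  have hnonneg : (0 : ℝ) ≤ m / P := by positivity
  rw [hs _ hnonneg, ← Int.natCast_floor_eq_floor hnonneg, Nat.floor_div_eq_div, Int.cast_natCast]

theorem apply_natCast_sub_one_div (hs : ∀ x : ℝ, 0 ≤ x → s x = s (⌊x⌋ : ℤ))
    {n : ℕ} (hn : 0 < n) (P : ℕ) :
    s (((n : ℝ) - 1) / P) = if P ∣ n then s ((n : ℝ) / P - 1) else s ((n : ℝ) / P) := by
  obtain ⟨m, rfl⟩ := Nat.exists_eq_add_of_lt hn
  have hdiv := Nat.succ_div (a := m) (b := P)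
  have hm : ((m + 1 : ℕ) : ℝ) - 1 = m := by push_cast; ring
  rw [zero_add, hm, apply_natCast_div_eq_apply_natDiv hs]
  split_ifs at hdiv ⊢ with hP
  · rw [← Nat.cast_div_charZero hP, hdiv, Nat.cast_add_one, add_sub_cancel_right]
  · rw [apply_natCast_div_eq_apply_natDiv hs, hdiv, add_zero]

theorem DOp_sub_DOp_sub_one {Q : Finset ℕ} (hQ : ∀ q ∈ Q, q.Prime)
    (hs : ∀ x : ℝ, 0 ≤ x → s x = s (⌊x⌋ : ℤ)) {n : ℕ} (hn : 0 < n) :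
    DOp Q s n - DOp Q s ((n : ℝ) - 1) =
      DOp (Q.filter (· ∣ n)) (fun x => s x - s (x - 1)) n := by
  unfold DOp
  rw [← sum_sub_distrib, ← filter_powerset_prod_dvd hQ, ← filter_erase, sum_filter]
  refine sum_congr rfl fun T _ => ?_
  rw [← Nat.cast_prod, apply_natCast_sub_one_div hs hn]
  split_ifs <;> ring

end StepFunction

theorem t_recurrence_general (Q : Finset ℕ) (hQ : ∀ q ∈ Q, Nat.Prime q)
    (d : ℕ) (s : ℝ → ℝ)
    (hfloor : ∀ x : ℝ, 0 ≤ x → s x = s (⌊x⌋ : ℤ))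
    (hrec : ∀ x : ℝ, 3 ≤ x → s x = d * DOp Q s x)
    (n : ℕ) (hn : 3 < n) :
    s n - s ((n : ℝ) - 1) =
      d * DOp (Q.filter (fun q => q ∣ n)) (fun x => s x - s (x - 1)) n ∧
    ((∀ q ∈ Q, ¬ q ∣ n) → s n - s ((n : ℝ) - 1) = 0) := by
  have hn' : (4 : ℝ) ≤ n := by exact_mod_cast hn
  have ht : s n - s ((n : ℝ) - 1) =
      d * DOp (Q.filter (fun q => q ∣ n)) (fun x => s x - s (x - 1)) n := by
    rw [hrec n (by linarith), hrec _ (by linarith), ← mul_sub,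
      DOp_sub_DOp_sub_one hQ hfloor (by omega)]
  refine ⟨ht, fun hnone => ?_⟩
  rw [ht, filter_false_of_mem hnone]
  simp [DOp]

/-- **Proposition 1.** Let `s(x) = s(⌊x⌋)` for `x ≥ 0` and
`s(x) = d·D_Q s(x)` for `x ≥ 3`. For an integer `n > 3`, with `Q(n)` the set of
elements of `Q` dividing `n` and `t(x) = s(x) - s(x-1)`, one has
`t(n) = d·D_{Q(n)} t(n)`; in particular, if no element of `Q` divides `n`, then
`t(n) = 0`. -/
theorem t_recurrence (Q : Finset ℕ) (hQ : ∀ q ∈ Q, Nat.Prime q)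
    (d : ℕ) (hd : 2 ≤ d) (s : ℝ → ℝ)
    (hfloor : ∀ x : ℝ, 0 ≤ x → s x = s (⌊x⌋ : ℤ))
    (hrec : ∀ x : ℝ, 3 ≤ x → s x = d * DOp Q s x)
    (n : ℕ) (hn : 3 < n) :
    s n - s ((n : ℝ) - 1) =
      d * DOp (Q.filter (fun q => q ∣ n)) (fun x => s x - s (x - 1)) n ∧
    ((∀ q ∈ Q, ¬ q ∣ n) → s n - s ((n : ℝ) - 1) = 0) :=
  t_recurrence_general Q hQ d s hfloor hrec n hn
end

section
/- Let s : [0,∞) → ℝ satisfy s(x) = s(⌊x⌋) for all x ≥ 0 and s(x) = d·D_Q s(x) for all x ≥ 3, where Q is a finite set of primes and d ≥ 2. Suppose s(x) > 0 for all x ≥ 0 and s(0) < s(1) < s(2). Then there exists a positive constant C such that s(x) ≤ C·x^{α} for all x > 1, where α = α(Q,d). -/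
/-!
On the integers put `g n = s n - s 0` and let `M = d ∏_{q ∈ Q} (1 - δ_q) - (d - 1)`, an arithmetic
function acting on sequences by `(f ⋆ g)(n) = ∑_{m ≤ n} f(m) g(⌊n/m⌋)` (`floorConv`), so that
`(f * h) ⋆ g = f ⋆ (h ⋆ g)`. The recurrence makes `M ⋆ g` constant from `3` on, hence bounded above
by some `E`, and then `g = M⁻¹ ⋆ (M ⋆ g) ≤ E ∑_{m ≤ n} M⁻¹(m)` as soon as `M⁻¹ ≥ 0`.

Both facts about `M⁻¹` come from inverting `M` one prime at a time: passing from a tail `t` of `Q`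
to `q :: t` multiplies the inverse `F` by `∑ ηʲ`, where `η = δ_q (1 + (d - 1) F) ≥ 0`. With
weights `n^{-α}` Dirichlet convolutions become products of sums, and the weighted mass of `η` is
at most `1 - D_{q :: t} / D_t`, where `D_t` is the value at `α` of the Dirichlet series of the
factor for `t`. This is `< 1` except at the last prime, where `D_Q = 0` by the choice of `α`.
There a weighted mass `≤ 1` of `η` still bounds the weighted mass of `∑ ηʲ` on every dyadic
block `(k, 2k + 1]` by `1`, and summing over the blocks gives `∑_{m ≤ N} M⁻¹(m) = O(N^α)`.
-/

open Finset ArithmeticFunction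

namespace FloorRecurrence

theorem sum_Ioc_mul_apply_mul_eq_sum_sum {R : Type*} [CommSemiring R]
    (f g : ArithmeticFunction R) (G : ℕ → R) (N : ℕ) :
    ∑ n ∈ Ioc 0 N, (f * g) n * G n
      = ∑ a ∈ Ioc 0 N, f a * ∑ b ∈ Ioc 0 (N / a), g b * G (a * b) := by
  simp_rw [mul_apply, sum_mul, mul_sum]
  rw [sum_sigma', sum_sigma']
  refine sum_nbij' (fun x => ⟨x.2.1, x.2.2⟩) (fun y => ⟨y.1 * y.2, (y.1, y.2)⟩) ?_ ?_ ?_ ?_ ?_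
  · rintro ⟨n, a, b⟩ h
    simp only [mem_sigma, mem_Ioc, Nat.mem_divisorsAntidiagonal] at h ⊢
    obtain ⟨⟨hn, hN⟩, rfl, -⟩ := h
    have ha := Nat.pos_of_mul_pos_right hn
    have hb := Nat.pos_of_mul_pos_left hn
    rw [Nat.le_div_iff_mul_le ha]
    exact ⟨⟨ha, by nlinarith⟩, hb, by linarith [mul_comm a b]⟩
  · rintro ⟨a, b⟩ h
    simp only [mem_sigma, mem_Ioc, Nat.mem_divisorsAntidiagonal] at h ⊢
    obtain ⟨⟨ha, -⟩, hb, hbN⟩ := h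
    rw [Nat.le_div_iff_mul_le ha] at hbN
    exact ⟨⟨Nat.mul_pos ha hb, by linarith [mul_comm a b]⟩, trivial, (Nat.mul_pos ha hb).ne'⟩
  · rintro ⟨n, a, b⟩ h
    simp only [mem_sigma, Nat.mem_divisorsAntidiagonal] at h
    obtain ⟨-, rfl, -⟩ := h
    rfl
  · intro y _; rfl
  · rintro ⟨n, a, b⟩ h
    simp only [mem_sigma, Nat.mem_divisorsAntidiagonal] at h
    obtain ⟨-, rfl, -⟩ := h
    simp only
    ring

section Geom

variable {R : Type*} [CommRing R]

theorem sum_apply {ι : Type*} (s : Finset ι) (f : ι → ArithmeticFunction R) (n : ℕ) :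
    (∑ i ∈ s, f i) n = ∑ i ∈ s, f i n :=
  map_sum (⟨⟨fun f : ArithmeticFunction R => f n, rfl⟩, fun _ _ => ArithmeticFunction.add_apply⟩ :
    ArithmeticFunction R →+ R) f s

theorem sub_apply (f g : ArithmeticFunction R) (n : ℕ) : (f - g) n = f n - g n := by
  rw [sub_eq_add_neg, ArithmeticFunction.add_apply, ArithmeticFunction.neg_apply, sub_eq_add_neg]

theorem pow_apply_eq_zero_of_lt {η : ArithmeticFunction R} (hη : η 1 = 0) :
    ∀ {j n : ℕ}, n < j → (η ^ j) n = 0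
  | 0, _, h => absurd h (Nat.not_lt_zero _)
  | j + 1, n, h => by
    rw [pow_succ', mul_apply]
    refine sum_eq_zero fun ⟨a, b⟩ hab => ?_
    obtain ⟨rfl, hn⟩ := Nat.mem_divisorsAntidiagonal.1 hab
    rcases eq_or_ne a 1 with rfl | ha1
    · simp [hη]
    · have ha : 2 ≤ a := by have := left_ne_zero_of_mul hn; omega
      have hb := Nat.pos_of_ne_zero (right_ne_zero_of_mul hn)
      rw [pow_apply_eq_zero_of_lt hη (by nlinarith : b < j), mul_zero]

/-- The Dirichlet inverse `∑ⱼ ηʲ` of `1 - η`; when `η 1 = 0` only the terms `j ≤ n`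
contribute at `n`. -/
def geom (η : ArithmeticFunction R) : ArithmeticFunction R :=
  ⟨fun n => ∑ j ∈ range (n + 1), (η ^ j) n, by simp⟩

theorem geom_apply (η : ArithmeticFunction R) (n : ℕ) :
    geom η n = ∑ j ∈ range (n + 1), (η ^ j) n := rfl

theorem geom_apply_eq_sum_range {η : ArithmeticFunction R} (hη : η 1 = 0) {n J : ℕ} (h : n ≤ J) :
    geom η n = ∑ j ∈ range (J + 1), (η ^ j) n :=
  sum_subset (range_subset_range.2 (by omega)) fun _ _ hj =>
    pow_apply_eq_zero_of_lt hη (by simp at hj; omega)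

theorem one_sub_mul_geom {η : ArithmeticFunction R} (hη : η 1 = 0) : (1 - η) * geom η = 1 := by
  ext n
  have hS : ((1 - η) * ∑ j ∈ range (n + 1), η ^ j) n = ((1 - η) * geom η) n := by
    simp only [mul_apply]
    refine sum_congr rfl fun ⟨a, b⟩ hab => ?_
    obtain ⟨rfl, hn⟩ := Nat.mem_divisorsAntidiagonal.1 hab
    rw [sum_apply, geom_apply_eq_sum_range hη
      (Nat.le_mul_of_pos_left b (Nat.pos_of_ne_zero (left_ne_zero_of_mul hn)))]
  rw [← hS, mul_neg_geom_sum, sub_apply, pow_apply_eq_zero_of_lt hη (Nat.lt_succ_self n), sub_zero]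

end Geom

def nonneg : Subsemiring (ArithmeticFunction ℝ) where
  carrier := {f | ∀ n, 0 ≤ f n}
  mul_mem' {f g} hf hg n := by
    rw [mul_apply]; exact sum_nonneg fun x _ => mul_nonneg (hf x.1) (hg x.2)
  one_mem' n := by rw [one_apply]; split_ifs <;> norm_num
  add_mem' hf hg n := add_nonneg (hf n) (hg n)
  zero_mem' _ := le_rfl

theorem mem_nonneg {f : ArithmeticFunction ℝ} : f ∈ nonneg ↔ ∀ n, 0 ≤ f n := Iff.rfl

theorem smul_mem_nonneg {r : ℝ} (hr : 0 ≤ r) {f : ArithmeticFunction ℝ} (hf : f ∈ nonneg) :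
    r • f ∈ nonneg :=
  fun n => by simpa using mul_nonneg hr (hf n)

theorem geom_mem_nonneg {η : ArithmeticFunction ℝ} (hη : η ∈ nonneg) : geom η ∈ nonneg :=
  fun n => by
    rw [geom_apply]; exact sum_nonneg fun j _ => mem_nonneg.1 (pow_mem hη j) n

def delta (k : ℕ) : ArithmeticFunction ℝ :=
  ⟨fun n => if n = k ∧ k ≠ 0 then 1 else 0, if_neg fun h => h.2 h.1.symm⟩

theorem delta_apply {k : ℕ} (hk : k ≠ 0) (n : ℕ) : delta k n = if n = k then 1 else 0 := by
  simp [delta, hk]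

theorem delta_mem_nonneg (k : ℕ) : delta k ∈ nonneg :=
  fun n => by simp only [delta, coe_mk]; split_ifs <;> norm_num

theorem delta_mul_apply_one {k : ℕ} (hk : k ≠ 1) (f : ArithmeticFunction ℝ) :
    (delta k * f) 1 = 0 := by
  rw [mul_apply, Nat.divisorsAntidiagonal_one, sum_singleton]
  simp [delta, Ne.symm hk]

section WeightedSum

variable (α : ℝ)

noncomputable def weightedSum (f : ArithmeticFunction ℝ) (N : ℕ) : ℝ :=
  ∑ n ∈ Ioc 0 N, f n * (n : ℝ) ^ (-α)

variable {α}

theorem weightedSum_nonneg {f : ArithmeticFunction ℝ} (hf : f ∈ nonneg) (N : ℕ) :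
    0 ≤ weightedSum α f N :=
  sum_nonneg fun n _ => mul_nonneg (hf n) (by positivity)

theorem weightedSum_mono {f : ArithmeticFunction ℝ} (hf : f ∈ nonneg) {M N : ℕ} (h : M ≤ N) :
    weightedSum α f M ≤ weightedSum α f N :=
  sum_le_sum_of_subset_of_nonneg (Ioc_subset_Ioc_right h) fun n _ _ =>
    mul_nonneg (hf n) (by positivity)

theorem weightedSum_mul (f g : ArithmeticFunction ℝ) (N : ℕ) :
    weightedSum α (f * g) N = ∑ a ∈ Ioc 0 N, f a * (a : ℝ) ^ (-α) * weightedSum α g (N / a) := by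
  rw [weightedSum, sum_Ioc_mul_apply_mul_eq_sum_sum]
  refine sum_congr rfl fun a _ => ?_
  rw [weightedSum, mul_sum, mul_sum]
  refine sum_congr rfl fun b _ => ?_
  rw [Nat.cast_mul, Real.mul_rpow (Nat.cast_nonneg a) (Nat.cast_nonneg b)]
  ring

theorem weightedSum_mul_le {f g : ArithmeticFunction ℝ} (hf : f ∈ nonneg) (hg : g ∈ nonneg)
    (N : ℕ) : weightedSum α (f * g) N ≤ weightedSum α f N * weightedSum α g N := by
  rw [weightedSum_mul, weightedSum.eq_def α f, Finset.sum_mul]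
  exact sum_le_sum fun a _ => mul_le_mul_of_nonneg_left
    (weightedSum_mono hg (Nat.div_le_self N a)) (mul_nonneg (hf a) (by positivity))

theorem weightedSum_one_le (N : ℕ) : weightedSum α 1 N ≤ 1 := by
  simp only [weightedSum, one_apply, ite_mul, one_mul, zero_mul, sum_ite_eq']
  split_ifs <;> simp

theorem weightedSum_add (f g : ArithmeticFunction ℝ) (N : ℕ) :
    weightedSum α (f + g) N = weightedSum α f N + weightedSum α g N := by
  simp only [weightedSum, ArithmeticFunction.add_apply, add_mul, sum_add_distrib]

theorem weightedSum_smul (r : ℝ) (f : ArithmeticFunction ℝ) (N : ℕ) :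
    weightedSum α (r • f) N = r * weightedSum α f N := by
  simp only [weightedSum, smul_map, smul_eq_mul, mul_sum, mul_assoc]

theorem weightedSum_delta_le (k N : ℕ) : weightedSum α (delta k) N ≤ (k : ℝ) ^ (-α) := by
  rcases eq_or_ne k 0 with rfl | hk
  · refine (sum_eq_zero fun n _ => ?_).le.trans (by positivity)
    simp [delta]
  · simp only [weightedSum, delta_apply hk, ite_mul, one_mul, zero_mul, sum_ite_eq']
    split_ifs <;> first | rfl | positivity

theorem weightedSum_pow_le {η : ArithmeticFunction ℝ} (hη : η ∈ nonneg) {θ : ℝ} (hθ : 0 ≤ θ)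
    (hηθ : ∀ N, weightedSum α η N ≤ θ) (j N : ℕ) : weightedSum α (η ^ j) N ≤ θ ^ j := by
  induction j generalizing N with
  | zero => simpa using weightedSum_one_le N
  | succ j ih =>
    rw [pow_succ', pow_succ']
    exact (weightedSum_mul_le hη (pow_mem hη j) N).trans
      (mul_le_mul (hηθ N) (ih N) (weightedSum_nonneg (pow_mem hη j) N) hθ)

theorem weightedSum_geom_le {η : ArithmeticFunction ℝ} (hη : η ∈ nonneg) (hη1 : η 1 = 0)
    {θ : ℝ} (hθ : 0 ≤ θ) (hθ1 : θ < 1) (hηθ : ∀ N, weightedSum α η N ≤ θ) (N : ℕ) :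
    weightedSum α (geom η) N ≤ (1 - θ)⁻¹ := by
  have hswap : weightedSum α (geom η) N = ∑ j ∈ range (N + 1), weightedSum α (η ^ j) N := by
    simp only [weightedSum]
    rw [sum_comm]
    refine sum_congr rfl fun n hn => ?_
    rw [geom_apply_eq_sum_range hη1 (mem_Ioc.1 hn).2, sum_mul]
  calc weightedSum α (geom η) N
      ≤ ∑ j ∈ range (N + 1), θ ^ j := by
        rw [hswap]; exact sum_le_sum fun j _ => weightedSum_pow_le hη hθ hηθ j N
    _ ≤ (1 - θ)⁻¹ := by
        simpa [← range_eq_Ico] using geom_sum_Ico_le_of_lt_one (m := 0) (n := N + 1) hθ hθ1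

theorem sum_Ioc_geom_mul_rpow_le_one {η : ArithmeticFunction ℝ} (hη : η ∈ nonneg)
    (hη1 : η 1 = 0) (hη_le : ∀ N, weightedSum α η N ≤ 1) (t : ℕ) :
    ∑ n ∈ Ioc t (2 * t + 1), geom η n * (n : ℝ) ^ (-α) ≤ 1 := by
  set J := 2 * t + 1
  set tail : ℕ → ℝ := fun j => ∑ n ∈ Ioc t J, (η ^ j) n * (n : ℝ) ^ (-α)
  have hsplit (j : ℕ) : weightedSum α (η ^ j) J = weightedSum α (η ^ j) t + tail j :=
    (sum_Ioc_consecutive _ (Nat.zero_le t) (by omega)).symm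
  -- as `η 1 = 0`, the factor `ηʲ` of `η * ηʲ` only sees `[1, J / 2] = [1, t]`
  have hstep (j : ℕ) : weightedSum α (η ^ (j + 1)) J ≤ weightedSum α (η ^ j) t := by
    have hηj := pow_mem hη j
    rw [pow_succ', weightedSum_mul]
    calc _ ≤ ∑ a ∈ Ioc 0 J, η a * (a : ℝ) ^ (-α) * weightedSum α (η ^ j) t := by
          refine sum_le_sum fun a ha => ?_
          rcases eq_or_ne a 1 with rfl | ha1
          · simp [hη1]
          · have hJa : J / a ≤ t :=
              (Nat.div_le_div_left (show 2 ≤ a by simp at ha; omega) two_pos).trans (by omega)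
            exact mul_le_mul_of_nonneg_left (weightedSum_mono hηj hJa)
              (mul_nonneg (hη a) (by positivity))
      _ = weightedSum α η J * weightedSum α (η ^ j) t := by rw [← sum_mul]; rfl
      _ ≤ weightedSum α (η ^ j) t :=
          mul_le_of_le_one_left (weightedSum_nonneg hηj t) (hη_le J)
  have htel (n : ℕ) : ∑ j ∈ range (n + 1), tail j + weightedSum α (η ^ n) t ≤ 1 := by
    induction n with
    | zero =>
      have h0 := hsplit 0
      simp only [zero_add, sum_range_one, pow_zero] at h0 ⊢
      linarith [weightedSum_one_le (α := α) J]
    | succ n ih => rw [sum_range_succ]; linarith [hstep n, hsplit (n + 1)]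
  calc ∑ n ∈ Ioc t J, geom η n * (n : ℝ) ^ (-α) = ∑ j ∈ range (J + 1), tail j := by
        simp only [tail]
        rw [sum_comm]
        refine sum_congr rfl fun n hn => ?_
        rw [geom_apply_eq_sum_range hη1 (mem_Ioc.1 hn).2, sum_mul]
    _ ≤ 1 := by linarith [htel J, weightedSum_nonneg (α := α) (pow_mem hη J) t]

theorem sum_Ioc_geom_le {η : ArithmeticFunction ℝ} (hα : 0 < α) (hη : η ∈ nonneg)
    (hη1 : η 1 = 0) (hη_le : ∀ N, weightedSum α η N ≤ 1) (N : ℕ) :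
    ∑ n ∈ Ioc 0 N, geom η n ≤ (1 - (2 : ℝ) ^ (-α))⁻¹ * (N : ℝ) ^ α := by
  set c := (1 - (2 : ℝ) ^ (-α))⁻¹
  have h2 : (2 : ℝ) ^ (-α) < 1 :=
    Real.rpow_lt_one_of_one_lt_of_neg one_lt_two (neg_lt_zero.2 hα)
  have hc : c * (2 : ℝ) ^ (-α) + 1 = c := by linarith [inv_mul_cancel₀ (sub_pos.2 h2).ne']
  induction N using Nat.strong_induction_on with
  | _ N ih =>
  rcases N.eq_zero_or_pos with rfl | hN
  · simp [Real.zero_rpow hα.ne']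
  set t := N / 2
  have hblock : ∑ n ∈ Ioc t N, geom η n ≤ (N : ℝ) ^ α := by
    calc ∑ n ∈ Ioc t N, geom η n
        ≤ ∑ n ∈ Ioc t N, geom η n * (n : ℝ) ^ (-α) * (N : ℝ) ^ α := by
          refine sum_le_sum fun n hn => ?_
          obtain ⟨htn, hnN⟩ := mem_Ioc.1 hn
          have hn0 : (0 : ℝ) < n := by exact_mod_cast (Nat.zero_le t).trans_lt htn
          have : 1 ≤ (n : ℝ) ^ (-α) * (N : ℝ) ^ α := by
            rw [Real.rpow_neg hn0.le, ← div_eq_inv_mul, one_le_div (by positivity)]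
            exact Real.rpow_le_rpow hn0.le (by exact_mod_cast hnN) hα.le
          rw [mul_assoc]
          exact le_mul_of_one_le_right (geom_mem_nonneg hη n) this
      _ = (∑ n ∈ Ioc t N, geom η n * (n : ℝ) ^ (-α)) * (N : ℝ) ^ α := by rw [sum_mul]
      _ ≤ 1 * (N : ℝ) ^ α := by
          refine mul_le_mul_of_nonneg_right ?_ (by positivity)
          refine le_trans ?_ (sum_Ioc_geom_mul_rpow_le_one hη hη1 hη_le t)
          exact sum_le_sum_of_subset_of_nonneg (Ioc_subset_Ioc_right (by omega))
            fun n _ _ => mul_nonneg (geom_mem_nonneg hη n) (by positivity)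
      _ = (N : ℝ) ^ α := one_mul _
  have hhead : ∑ n ∈ Ioc 0 t, geom η n ≤ c * (N : ℝ) ^ α * (2 : ℝ) ^ (-α) := by
    have ht : (t : ℝ) ≤ N / 2 := Nat.cast_div_le
    calc _ ≤ c * (t : ℝ) ^ α := ih t (by omega)
      _ ≤ c * ((N : ℝ) / 2) ^ α := mul_le_mul_of_nonneg_left
          (Real.rpow_le_rpow (by positivity) ht hα.le) (inv_pos.2 (sub_pos.2 h2)).le
      _ = c * (N : ℝ) ^ α * (2 : ℝ) ^ (-α) := by
          rw [Real.div_rpow (by positivity) zero_le_two, Real.rpow_neg zero_le_two]; ring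
  rw [← sum_Ioc_consecutive _ (Nat.zero_le t) (Nat.div_le_self N 2)]
  calc _ ≤ c * (N : ℝ) ^ α * (2 : ℝ) ^ (-α) + (N : ℝ) ^ α := add_le_add hhead hblock
    _ = c * (N : ℝ) ^ α := by linear_combination (N : ℝ) ^ α * hc

end WeightedSum

section Chain

variable (d α : ℝ)

def kernel (q : ℕ) (F : ArithmeticFunction ℝ) : ArithmeticFunction ℝ :=
  delta q * (1 + (d - 1) • F)

def chain : List ℕ → ArithmeticFunction ℝ
  | [] => 1
  | q :: t => chain t * geom (kernel d q (chain t))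

def eulerPoly (l : List ℕ) : ArithmeticFunction ℝ := (l.map fun q => 1 - delta q).prod

noncomputable def denom (l : List ℕ) : ArithmeticFunction ℝ := d • eulerPoly l - (d - 1) • 1

noncomputable def eulerPolyValue (l : List ℕ) : ℝ :=
  (l.map fun q : ℕ => 1 - (q : ℝ) ^ (-α)).prod

/-- The value at `α` of the Dirichlet series of `denom d l`. -/
noncomputable def denomValue (l : List ℕ) : ℝ := d * eulerPolyValue α l - (d - 1)

variable {d α}

theorem kernel_apply_one {q : ℕ} (hq : q ≠ 1) (F : ArithmeticFunction ℝ) : kernel d q F 1 = 0 :=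
  delta_mul_apply_one hq _

theorem kernel_mem_nonneg (hd : 1 ≤ d) (q : ℕ) {F : ArithmeticFunction ℝ} (hF : F ∈ nonneg) :
    kernel d q F ∈ nonneg :=
  mul_mem (delta_mem_nonneg q) (add_mem (one_mem _) (smul_mem_nonneg (by linarith) hF))

theorem chain_mem_nonneg (hd : 1 ≤ d) : ∀ l : List ℕ, chain d l ∈ nonneg
  | [] => one_mem _
  | q :: t => mul_mem (chain_mem_nonneg hd t)
      (geom_mem_nonneg (kernel_mem_nonneg hd q (chain_mem_nonneg hd t)))

/-- If `denom d t * F = 1`, then `denom d (q :: t) * F = 1 - kernel d q F`, which `geom` inverts;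
unlike the Dirichlet inverse of `denom d l` computed directly, `chain d l` is visibly
nonnegative. -/
theorem denom_mul_chain : ∀ l : List ℕ, (∀ q ∈ l, q ≠ 1) → denom d l * chain d l = 1
  | [], _ => by simp [denom, eulerPoly, chain, ← sub_smul]
  | q :: t, hl => by
    have ih := denom_mul_chain t fun r hr => hl r (List.mem_cons_of_mem q hr)
    have hgeom := one_sub_mul_geom (kernel_apply_one (d := d) (hl q List.mem_cons_self) (chain d t))
    rw [chain]
    set V := geom (kernel d q (chain d t))
    simp only [denom, eulerPoly, List.map_cons, List.prod_cons, kernel, Algebra.smul_def]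
      at ih hgeom ⊢
    linear_combination (1 - delta q) * V * ih + hgeom

theorem eulerPolyValue_pos (hα : 0 < α) :
    ∀ {l : List ℕ}, (∀ q ∈ l, 1 < q) → 0 < eulerPolyValue α l
  | [], _ => by simp [eulerPolyValue]
  | q :: t, hl => by
    rw [eulerPolyValue, List.map_cons, List.prod_cons]
    refine mul_pos (sub_pos.2 ?_)
      (eulerPolyValue_pos hα fun r hr => hl r (List.mem_cons_of_mem q hr))
    exact Real.rpow_lt_one_of_one_lt_of_neg (by exact_mod_cast hl q List.mem_cons_self)
      (by linarith)

theorem denomValue_cons (q : ℕ) (t : List ℕ) :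
    denomValue d α (q :: t) = denomValue d α t - d * (q : ℝ) ^ (-α) * eulerPolyValue α t := by
  simp only [denomValue, eulerPolyValue, List.map_cons, List.prod_cons]; ring

theorem denomValue_cons_lt (hα : 0 < α) (hd : 1 ≤ d) {q : ℕ} {t : List ℕ}
    (hl : ∀ r ∈ q :: t, 1 < r) : denomValue d α (q :: t) < denomValue d α t := by
  rw [denomValue_cons, sub_lt_self_iff]
  have hq : (0 : ℝ) < q := by exact_mod_cast (hl q List.mem_cons_self).trans' zero_lt_one
  have := eulerPolyValue_pos hα fun r hr => hl r (List.mem_cons_of_mem q hr)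
  have := Real.rpow_pos_of_pos hq (-α)
  have : 0 < d := by linarith
  positivity

theorem weightedSum_kernel_le (hd : 1 ≤ d) (q : ℕ) {t : List ℕ} (hDt : 0 < denomValue d α t)
    (ht : ∀ N, weightedSum α (chain d t) N ≤ (denomValue d α t)⁻¹) (N : ℕ) :
    weightedSum α (kernel d q (chain d t)) N ≤ 1 - denomValue d α (q :: t) / denomValue d α t := by
  calc weightedSum α (kernel d q (chain d t)) N
      ≤ (q : ℝ) ^ (-α) * (1 + (d - 1) * (denomValue d α t)⁻¹) := by
        have hG : 1 + (d - 1) • chain d t ∈ nonneg :=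
          add_mem (one_mem _) (smul_mem_nonneg (by linarith) (chain_mem_nonneg hd t))
        have hGle : weightedSum α (1 + (d - 1) • chain d t) N
            ≤ 1 + (d - 1) * (denomValue d α t)⁻¹ := by
          rw [weightedSum_add, weightedSum_smul]
          exact add_le_add (weightedSum_one_le N) (mul_le_mul_of_nonneg_left (ht N) (by linarith))
        exact (weightedSum_mul_le (delta_mem_nonneg q) hG N).trans
          (mul_le_mul (weightedSum_delta_le q N) hGle (weightedSum_nonneg hG N) (by positivity))
    _ = 1 - denomValue d α (q :: t) / denomValue d α t := by
        rw [denomValue_cons]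
        field_simp
        simp only [denomValue]
        ring

theorem weightedSum_chain_le (hα : 0 < α) (hd : 1 ≤ d) :
    ∀ {l : List ℕ}, (∀ q ∈ l, 1 < q) → 0 < denomValue d α l →
      ∀ N, weightedSum α (chain d l) N ≤ (denomValue d α l)⁻¹
  | [], _, _, N => by simpa [denomValue, eulerPolyValue, chain] using weightedSum_one_le N
  | q :: t, hl, hD, N => by
    have hDt : 0 < denomValue d α t := hD.trans (denomValue_cons_lt hα hd hl)
    have ht := weightedSum_chain_le hα hd (fun r hr => hl r (List.mem_cons_of_mem q hr)) hDt
    have hη := kernel_mem_nonneg hd q (chain_mem_nonneg hd t)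
    have hratio : 0 < denomValue d α (q :: t) / denomValue d α t := div_pos hD hDt
    have hratio1 : denomValue d α (q :: t) / denomValue d α t ≤ 1 :=
      (div_le_one hDt).2 (denomValue_cons_lt hα hd hl).le
    calc weightedSum α (chain d (q :: t)) N
        ≤ weightedSum α (chain d t) N * weightedSum α (geom (kernel d q (chain d t))) N :=
          weightedSum_mul_le (chain_mem_nonneg hd t) (geom_mem_nonneg hη) N
      _ ≤ (denomValue d α t)⁻¹ * (1 - (1 - denomValue d α (q :: t) / denomValue d α t))⁻¹ :=
          mul_le_mul (ht N)
            (weightedSum_geom_le hη (kernel_apply_one (hl q List.mem_cons_self).ne' _)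
              (by linarith) (by linarith) (weightedSum_kernel_le hd q hDt ht) N)
            (weightedSum_nonneg (geom_mem_nonneg hη) N) (by positivity)
      _ = (denomValue d α (q :: t))⁻¹ := by rw [sub_sub_cancel, inv_div]; field_simp

theorem exists_sum_Ioc_chain_le (hα : 0 < α) (hd : 1 ≤ d) {q : ℕ} {t : List ℕ}
    (hl : ∀ r ∈ q :: t, 1 < r) (hD : 0 ≤ denomValue d α (q :: t)) :
    ∃ C, 0 ≤ C ∧ ∀ N : ℕ, ∑ n ∈ Ioc 0 N, chain d (q :: t) n ≤ C * (N : ℝ) ^ α := by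
  have hDt : 0 < denomValue d α t := hD.trans_lt (denomValue_cons_lt hα hd hl)
  have ht := weightedSum_chain_le hα hd (fun r hr => hl r (List.mem_cons_of_mem q hr)) hDt
  have hη := kernel_mem_nonneg hd q (chain_mem_nonneg hd t)
  have hη_le (N : ℕ) : weightedSum α (kernel d q (chain d t)) N ≤ 1 :=
    (weightedSum_kernel_le hd q hDt ht N).trans (by linarith [div_nonneg hD hDt.le])
  set c := (1 - (2 : ℝ) ^ (-α))⁻¹
  have hc : 0 ≤ c := inv_nonneg.2 (sub_nonneg.2
    (Real.rpow_le_one_of_one_le_of_nonpos one_le_two (by linarith)))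
  refine ⟨c * (denomValue d α t)⁻¹, by positivity, fun N => ?_⟩
  rw [chain, sum_Ioc_mul_eq_sum_sum]
  calc ∑ a ∈ Ioc 0 N, chain d t a * ∑ b ∈ Ioc 0 (N / a), geom (kernel d q (chain d t)) b
      ≤ ∑ a ∈ Ioc 0 N, chain d t a * (c * (N : ℝ) ^ α * (a : ℝ) ^ (-α)) := by
        refine sum_le_sum fun a ha => mul_le_mul_of_nonneg_left ?_ (chain_mem_nonneg hd t a)
        have ha0 : (0 : ℝ) < a := by exact_mod_cast (mem_Ioc.1 ha).1
        calc _ ≤ c * ((N / a : ℕ) : ℝ) ^ α :=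
              sum_Ioc_geom_le hα hη (kernel_apply_one (hl q List.mem_cons_self).ne' _) hη_le _
          _ ≤ c * ((N : ℝ) / a) ^ α :=
              mul_le_mul_of_nonneg_left (Real.rpow_le_rpow (by positivity) Nat.cast_div_le hα.le) hc
          _ = c * (N : ℝ) ^ α * (a : ℝ) ^ (-α) := by
              rw [Real.div_rpow (by positivity) ha0.le, Real.rpow_neg ha0.le]; ring
    _ = c * (N : ℝ) ^ α * weightedSum α (chain d t) N := by
        rw [weightedSum, mul_sum]; exact sum_congr rfl fun a _ => by ring
    _ ≤ c * (N : ℝ) ^ α * (denomValue d α t)⁻¹ :=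
        mul_le_mul_of_nonneg_left (ht N) (by positivity)
    _ = c * (denomValue d α t)⁻¹ * (N : ℝ) ^ α := by ring

theorem exists_sum_Ioc_chain_toList_le (hα : 0 < α) (hd : 1 ≤ d) {Q : Finset ℕ}
    (hQ : ∀ q ∈ Q, 1 < q) (hαQ : (d - 1) / d = ∏ q ∈ Q, (1 - (q : ℝ) ^ (-α))) :
    ∃ C, 0 ≤ C ∧ ∀ N : ℕ, ∑ n ∈ Ioc 0 N, chain d Q.toList n ≤ C * (N : ℝ) ^ α := by
  have hD : denomValue d α Q.toList = 0 := by
    rw [denomValue, eulerPolyValue, prod_map_toList, ← hαQ]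
    field_simp
    ring
  rcases hl : Q.toList with _ | ⟨q, t⟩
  · simp [hl, denomValue, eulerPolyValue] at hD
  · exact exists_sum_Ioc_chain_le hα hd (hl ▸ fun q hq => hQ q (mem_toList.1 hq)) (hl ▸ hD.ge)

end Chain

section FloorConv

def floorConv (f : ArithmeticFunction ℝ) (g : ℕ → ℝ) (n : ℕ) : ℝ :=
  ∑ m ∈ Ioc 0 n, f m * g (n / m)

theorem floorConv_zero (f : ArithmeticFunction ℝ) (g : ℕ → ℝ) : floorConv f g 0 = 0 := rfl

theorem floorConv_mul (f h : ArithmeticFunction ℝ) (g : ℕ → ℝ) :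
    floorConv (f * h) g = floorConv f (floorConv h g) := by
  ext n
  simp only [floorConv, sum_Ioc_mul_apply_mul_eq_sum_sum, Nat.div_div_eq_div_mul]

theorem floorConv_one {g : ℕ → ℝ} (hg : g 0 = 0) : floorConv 1 g = g := by
  ext n
  rcases n.eq_zero_or_pos with rfl | hn
  · exact hg.symm
  · simp [floorConv, one_apply, hn.ne']

theorem floorConv_delta {g : ℕ → ℝ} (hg : g 0 = 0) {k : ℕ} (hk : k ≠ 0) (n : ℕ) :
    floorConv (delta k) g n = g (n / k) := by
  simp only [floorConv, delta_apply hk, ite_mul, one_mul, zero_mul, sum_ite_eq', mem_Ioc]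
  split_ifs with h
  · rfl
  · rw [Nat.div_eq_of_lt (by omega), hg]

theorem floorConv_sub (f h : ArithmeticFunction ℝ) (g : ℕ → ℝ) (n : ℕ) :
    floorConv (f - h) g n = floorConv f g n - floorConv h g n := by
  simp only [floorConv, sub_apply, sub_mul, sum_sub_distrib]

theorem floorConv_smul (r : ℝ) (f : ArithmeticFunction ℝ) (g : ℕ → ℝ) (n : ℕ) :
    floorConv (r • f) g n = r * floorConv f g n := by
  simp only [floorConv, smul_map, smul_eq_mul, mul_sum, mul_assoc]

theorem floorConv_prod_one_sub_delta {g : ℕ → ℝ} (hg : g 0 = 0) {Q : Finset ℕ}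
    (hQ : ∀ q ∈ Q, q ≠ 0) (n : ℕ) :
    floorConv (∏ q ∈ Q, (1 - delta q)) g n
      = ∑ T ∈ Q.powerset, (-1) ^ T.card * g (n / ∏ q ∈ T, q) := by
  induction Q using Finset.induction_on generalizing n with
  | empty => simp [floorConv_one hg]
  | insert a Q haQ ih =>
    have ih' := ih fun q hq => hQ q (mem_insert_of_mem hq)
    rw [prod_insert haQ, floorConv_mul, floorConv_sub, floorConv_one (floorConv_zero _ _),
      floorConv_delta (floorConv_zero _ _) (hQ a (mem_insert_self a Q)), ih', ih',
      sum_powerset_insert haQ, sub_eq_add_neg, ← sum_neg_distrib]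
    congr 1
    refine sum_congr rfl fun T hT => ?_
    have haT : a ∉ T := fun h => haQ (mem_powerset.1 hT h)
    rw [card_insert_of_notMem haT, prod_insert haT, pow_succ, Nat.div_div_eq_div_mul]
    ring

theorem floorConv_le_mul_sum {f : ArithmeticFunction ℝ} (hf : f ∈ nonneg) {g : ℕ → ℝ} {E : ℝ}
    (hg : ∀ j, 0 < j → g j ≤ E) (n : ℕ) : floorConv f g n ≤ E * ∑ m ∈ Ioc 0 n, f m := by
  rw [mul_sum]
  refine sum_le_sum fun m hm => ?_
  obtain ⟨hm0, hmn⟩ := mem_Ioc.1 hm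
  rw [mul_comm E]
  exact mul_le_mul_of_nonneg_left (hg _ (Nat.div_pos hmn hm0)) (hf m)

end FloorConv

section Recurrence

variable {Q : Finset ℕ} {d : ℝ} {s : ℝ → ℝ}

theorem apply_eq_apply_natFloor (hfloor : ∀ x : ℝ, 0 ≤ x → s x = s (⌊x⌋ : ℤ)) {x : ℝ}
    (hx : 0 ≤ x) : s x = s ⌊x⌋₊ := by
  rw [hfloor x hx, natCast_floor_eq_intCast_floor hx]

theorem mul_sum_powerset_apply_div_eq (hfloor : ∀ x : ℝ, 0 ≤ x → s x = s (⌊x⌋ : ℤ))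
    (hrec : ∀ x : ℝ, 3 ≤ x → s x = d * DOp Q s x) {j : ℕ} (hj : 3 ≤ j) :
    d * ∑ T ∈ Q.powerset, (-1) ^ T.card * s ((j / ∏ q ∈ T, q : ℕ) : ℝ) = (d - 1) * s j := by
  have hDOp : DOp Q s j
      = -∑ T ∈ Q.powerset.erase ∅, (-1) ^ T.card * s ((j / ∏ q ∈ T, q : ℕ) : ℝ) := by
    rw [DOp, ← sum_neg_distrib]
    refine sum_congr rfl fun T _ => ?_
    rw [apply_eq_apply_natFloor hfloor (by positivity), ← Nat.cast_prod, Nat.floor_div_eq_div,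
      pow_succ]
    ring
  rw [← add_sum_erase _ _ (empty_mem_powerset Q)]
  simp only [card_empty, pow_zero, prod_empty, Nat.div_one, one_mul]
  linear_combination hrec j (by exact_mod_cast hj) + d * hDOp

theorem floorConv_denom_toList {g : ℕ → ℝ} (hg : g 0 = 0) (hQ : ∀ q ∈ Q, q ≠ 0) (n : ℕ) :
    floorConv (denom d Q.toList) g n
      = d * ∑ T ∈ Q.powerset, (-1) ^ T.card * g (n / ∏ q ∈ T, q) - (d - 1) * g n := by
  rw [denom, floorConv_sub, floorConv_smul, floorConv_smul, floorConv_one hg, eulerPoly,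
    prod_map_toList, floorConv_prod_one_sub_delta hg hQ]

theorem exists_le_mul_sum_chain (hQ : ∀ q ∈ Q, 1 < q) (hd : 1 ≤ d)
    (hfloor : ∀ x : ℝ, 0 ≤ x → s x = s (⌊x⌋ : ℤ)) (hrec : ∀ x : ℝ, 3 ≤ x → s x = d * DOp Q s x) :
    ∃ E, 0 ≤ E ∧ ∀ n : ℕ, s n ≤ E * ∑ m ∈ Ioc 0 n, chain d Q.toList m + s 0 := by
  -- the recurrence also has terms `s 0` from `∏ T > j`, which `floorConv` omits unless `g 0 = 0`
  set g : ℕ → ℝ := fun n => s n - s 0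
  have hg : g 0 = 0 := by simp [g]
  have hQ0 : ∀ q ∈ Q, q ≠ 0 := fun q hq => (hQ q hq).ne_bot
  set e := floorConv (denom d Q.toList) g
  have he_const (j : ℕ) (hj : 3 ≤ j) :
      e j = s 0 * ((d - 1) - d * ∑ T ∈ Q.powerset, (-1) ^ T.card) := by
    simp only [e, floorConv_denom_toList hg hQ0, g, mul_sub, sum_sub_distrib, ← sum_mul]
    linear_combination mul_sum_powerset_apply_div_eq hfloor hrec hj
  set E := max (max (e 1) (e 2)) (max (e 3) 0)
  have he (j : ℕ) (hj : 0 < j) : e j ≤ E := by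
    rcases (by omega : j = 1 ∨ j = 2 ∨ 3 ≤ j) with rfl | rfl | hj3
    · exact (le_max_left _ _).trans (le_max_left _ _)
    · exact (le_max_right _ _).trans (le_max_left _ _)
    · rw [he_const j hj3, ← he_const 3 le_rfl]
      exact (le_max_left _ _).trans (le_max_right _ _)
  refine ⟨E, (le_max_right _ _).trans (le_max_right _ _), fun n => ?_⟩
  have hrepr : g n = floorConv (chain d Q.toList) e n := by
    rw [← floorConv_mul, mul_comm,
      denom_mul_chain _ fun q hq => (hQ q (mem_toList.1 hq)).ne', floorConv_one hg]
  have := floorConv_le_mul_sum (chain_mem_nonneg hd Q.toList) he n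
  simp only [g] at hrepr
  linarith

end Recurrence

end FloorRecurrence

open FloorRecurrence

theorem s_upper_bound_general (Q : Finset ℕ) (hQ : ∀ q ∈ Q, Nat.Prime q)
    (d : ℕ) (hd : 2 ≤ d) (s : ℝ → ℝ)
    (hfloor : ∀ x : ℝ, 0 ≤ x → s x = s (⌊x⌋ : ℤ))
    (hrec : ∀ x : ℝ, 3 ≤ x → s x = d * DOp Q s x)
    (α : ℝ) (hα : 0 < α ∧ ((d : ℝ) - 1) / d = ∏ q ∈ Q, (1 - (q : ℝ) ^ (-α))) :
    ∃ C : ℝ, 0 < C ∧ ∀ x : ℝ, 1 < x → s x ≤ C * x ^ α := by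
  obtain ⟨hα0, hαQ⟩ := hα
  have hQ1 : ∀ q ∈ Q, 1 < q := fun q hq => (hQ q hq).one_lt
  have hd1 : (1 : ℝ) ≤ d := by exact_mod_cast (by omega : 1 ≤ d)
  obtain ⟨C, hC0, hC⟩ := exists_sum_Ioc_chain_toList_le hα0 hd1 hQ1 hαQ
  obtain ⟨E, hE0, hE⟩ := exists_le_mul_sum_chain hQ1 hd1 hfloor hrec
  refine ⟨E * C + |s 0| + 1, by positivity, fun x hx => ?_⟩
  have hn : (1 : ℝ) ≤ ⌊x⌋₊ := by exact_mod_cast Nat.le_floor (by exact_mod_cast hx.le)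
  have hnα : 1 ≤ (⌊x⌋₊ : ℝ) ^ α := Real.one_le_rpow hn hα0.le
  have hxα : (⌊x⌋₊ : ℝ) ^ α ≤ x ^ α :=
    Real.rpow_le_rpow (by positivity) (Nat.floor_le (by linarith)) hα0.le
  calc s x = s ⌊x⌋₊ := apply_eq_apply_natFloor hfloor (by linarith)
    _ ≤ E * (C * (⌊x⌋₊ : ℝ) ^ α) + |s 0| * (⌊x⌋₊ : ℝ) ^ α :=
        (hE _).trans (add_le_add (mul_le_mul_of_nonneg_left (hC _) hE0)
          ((le_abs_self _).trans (le_mul_of_one_le_right (abs_nonneg _) hnα)))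
    _ ≤ (E * C + |s 0| + 1) * x ^ α := by nlinarith [abs_nonneg (s 0), mul_nonneg hE0 hC0]

/-- **Lemma 4.** If `s(x) = s(⌊x⌋)` for `x ≥ 0`,
`s(x) = d·D_Q s(x)` for `x ≥ 3`, `s(x) > 0` for all `x ≥ 0` and
`s(0) < s(1) < s(2)`, then there is a constant `C > 0` with `s(x) ≤ C·x^α` for
all `x > 1`, where `α = α(Q,d)` is the unique positive root of
`(d-1)/d = ∏_{q ∈ Q} (1 - q^{-x})`. -/
theorem s_upper_bound (Q : Finset ℕ) (hQ : ∀ q ∈ Q, Nat.Prime q)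
    (d : ℕ) (hd : 2 ≤ d) (s : ℝ → ℝ)
    (hfloor : ∀ x : ℝ, 0 ≤ x → s x = s (⌊x⌋ : ℤ))
    (hrec : ∀ x : ℝ, 3 ≤ x → s x = d * DOp Q s x)
    (hpos : ∀ x : ℝ, 0 ≤ x → 0 < s x)
    (h01 : s 0 < s 1) (h12 : s 1 < s 2)
    (α : ℝ) (hα : 0 < α ∧ ((d : ℝ) - 1) / d = ∏ q ∈ Q, (1 - (q : ℝ) ^ (-α))) :
    ∃ C : ℝ, 0 < C ∧ ∀ x : ℝ, 1 < x → s x ≤ C * x ^ α :=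
  s_upper_bound_general Q hQ d hd s hfloor hrec α hα
end

section
/- Let Q be a finite set of prime numbers of cardinality at least 2, let d ≥ 2, and let α = α(Q,d) be the unique positive real root of (d−1)/d = ∏_{q∈Q}(1 − q^{−x}). Then the equation (d−1)/d = ∏_{q∈Q}(1 − q^{−z}) has no complex root z with Re(z) = α other than z = α itself; that is, if y is a nonzero real number then ∏_{q∈Q}(1 − q^{−(α+iy)}) ≠ (d−1)/d. -/
/-!
With `w_q = q^{-(α+iy)}` we have `‖w_q‖ = q^{-α} < 1` and `‖1 - w_q‖ ≥ 1 - q^{-α}`. The product of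
the lower bounds is already `(d-1)/d`, so a root forces equality in every factor, which makes every
`w_q` a positive real: `y log q ∈ 2πℤ` for all `q ∈ Q`. For two distinct primes `p, q` this makes
`log p / log q` rational, contradicting unique factorisation.
-/

open Complex Finset Real

lemma Complex.eq_norm_of_norm_one_sub_eq {z : ℂ} (h : ‖1 - z‖ = 1 - ‖z‖) : z = ‖z‖ := by
  have hz : ‖z‖ ≤ 1 := by linarith [norm_nonneg (1 - z)]
  have hsub : ‖1 - z‖ = |‖(1 : ℂ)‖ - ‖z‖| := by rw [h, norm_one, abs_of_nonneg (sub_nonneg.2 hz)]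
  rcases norm_sub_eq_iff.mp hsub with h1 | rfl | harg
  · exact absurd h1 one_ne_zero
  · simp
  · rw [arg_one, eq_comm, arg_eq_zero_iff_zero_le] at harg
    exact RCLike.norm_le_re_iff_eq_norm.mp (re_eq_norm.mpr harg).ge

lemma Finset.norm_one_sub_eq_of_norm_prod_eq {ι 𝕜 : Type*} [NormedField 𝕜] {s : Finset ι}
    {w : ι → 𝕜} (hw : ∀ i ∈ s, ‖w i‖ < 1)
    (h : ‖∏ i ∈ s, (1 - w i)‖ = ∏ i ∈ s, (1 - ‖w i‖)) :
    ∀ i ∈ s, ‖1 - w i‖ = 1 - ‖w i‖ := by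
  have hle : ∀ i ∈ s, 1 - ‖w i‖ ≤ ‖1 - w i‖ := fun i _ => by
    simpa using norm_sub_norm_le (1 : 𝕜) (w i)
  by_contra! ⟨i, hi, hne⟩
  have hlt := prod_lt_prod (fun i hi => sub_pos.2 (hw i hi)) hle ⟨i, hi, (hle i hi).lt_of_ne hne.symm⟩
  rw [← norm_prod, h] at hlt
  exact lt_irrefl _ hlt

lemma Complex.exists_int_im_mul_log_eq_of_cpow_eq_norm {x : ℝ} (hx : 0 < x) {s : ℂ}
    (h : (x : ℂ) ^ s = ‖(x : ℂ) ^ s‖) : ∃ n : ℤ, s.im * Real.log x = n * (2 * π) := by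
  have hx' : (x : ℂ) ≠ 0 := ofReal_ne_zero.2 hx.ne'
  rw [norm_cpow_eq_rpow_re_of_pos hx, cpow_def_of_ne_zero hx', Real.rpow_def_of_pos hx, ofReal_exp,
    exp_eq_exp_iff_exists_int] at h
  obtain ⟨n, hn⟩ := h
  refine ⟨n, ?_⟩
  simpa [← ofReal_log hx.le, mul_comm] using congrArg Complex.im hn

lemma Nat.Prime.eq_zero_of_mul_log_eq_mul_log {p q : ℕ} (hp : p.Prime) (hq : q.Prime) (hpq : p ≠ q)
    {m n : ℤ} (h : m * Real.log p = n * Real.log q) : m = 0 := by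
  have hlogp : 0 < Real.log p := Real.log_pos (by exact_mod_cast hp.one_lt)
  have hlogq : 0 < Real.log q := Real.log_pos (by exact_mod_cast hq.one_lt)
  by_contra hm
  have hn : n ≠ 0 := by
    rintro rfl
    exact hm (by simpa [hlogp.ne'] using h)
  have habs : (m.natAbs : ℝ) * Real.log p = n.natAbs * Real.log q := by
    simpa [abs_mul, abs_of_pos hlogp, abs_of_pos hlogq] using congrArg abs h
  have hpow : p ^ m.natAbs = q ^ n.natAbs := by
    have : Real.log ((p : ℝ) ^ m.natAbs) = Real.log ((q : ℝ) ^ n.natAbs) := by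
      rw [Real.log_pow, Real.log_pow, habs]
    exact_mod_cast Real.log_injOn_pos (Set.mem_Ioi.2 (pow_pos (Nat.cast_pos.2 hp.pos) _))
      (Set.mem_Ioi.2 (pow_pos (Nat.cast_pos.2 hq.pos) _)) this
  exact hpq (hp.pow_inj' hq (Int.natAbs_ne_zero.2 hm) (Int.natAbs_ne_zero.2 hn) hpow).1

theorem no_root_on_critical_line_general (Q : Finset ℕ) (hQ : ∀ q ∈ Q, Nat.Prime q)
    (hk : 2 ≤ Q.card) (d : ℕ) (α : ℝ)
    (hα : 0 < α ∧ ((d : ℝ) - 1) / d = ∏ q ∈ Q, (1 - (q : ℝ) ^ (-α))) :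
    ∀ y : ℝ, y ≠ 0 →
      (∏ q ∈ Q, (1 - (q : ℂ) ^ (-((α : ℂ) + Complex.I * (y : ℂ))))) ≠
        ((d : ℂ) - 1) / d := by
  obtain ⟨hα0, hprod⟩ := hα
  intro y hy h
  set w : ℕ → ℂ := fun q => (q : ℂ) ^ (-((α : ℂ) + I * y))
  have hq1 : ∀ q ∈ Q, (1 : ℝ) < q := fun q hq => by exact_mod_cast (hQ q hq).one_lt
  have hnorm : ∀ q ∈ Q, ‖w q‖ = (q : ℝ) ^ (-α) := fun q hq => by
    simp [w, norm_natCast_cpow_of_pos (hQ q hq).pos]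
  have hw_lt : ∀ q ∈ Q, ‖w q‖ < 1 := fun q hq => by
    rw [hnorm q hq]; exact Real.rpow_lt_one_of_one_lt_of_neg (hq1 q hq) (neg_neg_of_pos hα0)
  have hnorm_prod : ‖∏ q ∈ Q, (1 - w q)‖ = ∏ q ∈ Q, (1 - ‖w q‖) := by
    have hd_real : ((d : ℂ) - 1) / d = (((d : ℝ) - 1) / d : ℝ) := by push_cast; rfl
    rw [h, hd_real, norm_real, Real.norm_of_nonneg, hprod]
    · exact prod_congr rfl fun q hq => by rw [hnorm q hq]
    · rw [hprod]; exact prod_nonneg fun q hq => by linarith [hw_lt q hq, hnorm q hq]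
  have hperiod : ∀ q ∈ Q, ∃ n : ℤ, -y * Real.log q = n * (2 * π) := fun q hq => by
    have hreal := eq_norm_of_norm_one_sub_eq (norm_one_sub_eq_of_norm_prod_eq hw_lt hnorm_prod q hq)
    simpa [w] using exists_int_im_mul_log_eq_of_cpow_eq_norm (by linarith [hq1 q hq]) hreal
  obtain ⟨p, hp, q, hq, hpq⟩ := Finset.one_lt_card.mp hk
  obtain ⟨n, hn⟩ := hperiod p hp
  obtain ⟨m, hm⟩ := hperiod q hq
  have hm0 : m = 0 := (hQ p hp).eq_zero_of_mul_log_eq_mul_log (hQ q hq) hpq (n := n) <|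
    mul_left_cancel₀ (neg_ne_zero.2 hy) (by linear_combination (m : ℝ) * hn - n * hm)
  have hlogq : Real.log q ≠ 0 := (Real.log_pos (hq1 q hq)).ne'
  simp [hm0, hy, hlogq] at hm

/-- **Lemma 5.** For a finite set `Q` of primes with `|Q| ≥ 2` and
`d ≥ 2`, the equation `(d-1)/d = ∏_{q ∈ Q} (1 - q^{-z})` has no complex root on
the line `Re z = α(Q,d)` other than `z = α(Q,d)` itself. -/
theorem no_root_on_critical_line (Q : Finset ℕ) (hQ : ∀ q ∈ Q, Nat.Prime q)
    (hk : 2 ≤ Q.card) (d : ℕ) (hd : 2 ≤ d) (α : ℝ)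
    (hα : 0 < α ∧ ((d : ℝ) - 1) / d = ∏ q ∈ Q, (1 - (q : ℝ) ^ (-α))) :
    ∀ y : ℝ, y ≠ 0 →
      (∏ q ∈ Q, (1 - (q : ℂ) ^ (-((α : ℂ) + Complex.I * (y : ℂ))))) ≠
        ((d : ℂ) - 1) / d :=
  no_root_on_critical_line_general Q hQ hk d α hα
end
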